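/- arXiv:1810.06186 — 10 statements merged into one kernel-verified Lean document; each statement's English description precedes it below -/
import Mathlib

section
/- Fix an integer q ≥ 1, and let G be the graph whose vertex set is partitioned into five cliques Q_1, …, Q_5, each of size q, such that for each i mod 5 every vertex in Q_i is adjacent to every vertex in Q_{i+1} ∪ Q_{i-1} and to no vertex in Q_{i+2} ∪ Q_{i-2}. Then G is (P5, gem)-free, ω(G) = 2q, Δ(G) = 3q − 1, G has no stable set of size 3, and hence χ(G) ≥ ⌈5q/2⌉. -/
/-!
`G` is the blow-up of the 5-cycle in which every vertex becomes a clique of size `q`. The vertices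
of an induced subgraph of `G` on five vertices, sent to their classes, exhibit that subgraph as a
blow-up of `C₅` again, and a finite check shows that neither `P₅` nor the gem is one. Cliques and
stable sets of `G` project onto cliques and stable sets of `C₅`, injectively for stable sets, so
`ω(G) = 2q` and `α(G) = 2`; each vertex sees its own class and the two neighbouring ones, so `G`
is `(3q - 1)`-regular. Finally, the colour classes of a `k`-colouring are stable sets of size at
most `2` covering the `5q` vertices, so `5q ≤ 2k`.
-/

open SimpleGraph

/-- The gem: a path 0-1-2-3 on 4 vertices plus a fifth vertex 4 adjacent to all of them. -/
def gem : SimpleGraph (Fin 5) :=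
  SimpleGraph.fromEdgeSet {s(0,1), s(1,2), s(2,3), s(4,0), s(4,1), s(4,2), s(4,3)}

/-- `G` is `H`-free: no induced subgraph of `G` is isomorphic to `H`. -/
def InducedFree {W V : Type*} (H : SimpleGraph W) (G : SimpleGraph V) : Prop :=
  ¬ Nonempty (H ↪g G)

def P5GemFree {V : Type*} (G : SimpleGraph V) : Prop :=
  InducedFree (SimpleGraph.pathGraph 5) G ∧ InducedFree gem G

open Finset

section CliqueBlowup

variable {V W α : Type*}

def IsCliqueBlowup (G : SimpleGraph V) (H : SimpleGraph α) (f : V → α) : Prop :=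
  ∀ u v, G.Adj u v ↔ u ≠ v ∧ (f u = f v ∨ H.Adj (f u) (f v))

section Fibers

variable [Fintype V] [DecidableEq α] {f : V → α} {q : ℕ}

theorem card_filter_mem_eq_mul (hq : ∀ a, #{v | f v = a} = q) (T : Finset α) :
    #{v | f v ∈ T} = #T * q := by
  rw [card_eq_sum_card_fiberwise (s := {v | f v ∈ T}) (t := T) fun v hv => (mem_filter.1 hv).2,
    sum_congr rfl fun a ha => ?_, sum_const, smul_eq_mul]
  rw [filter_filter, ← hq a]
  congr 1
  ext v
  simp only [mem_filter, mem_univ, true_and, and_iff_right_iff_imp]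
  exact fun hv => hv ▸ ha

theorem card_le_mul_card_image_of_card_fiber (hq : ∀ a, #{v | f v = a} = q) (s : Finset V) :
    #s ≤ q * #(s.image f) :=
  card_le_mul_card_image s q fun a _ =>
    (card_le_card (filter_subset_filter _ (subset_univ s))).trans (hq a).le

end Fibers

theorem ceilDiv_card_le_chromaticNumber [Fintype V] {G : SimpleGraph V} {k : ℕ} (hk : 0 < k)
    (h : ∀ s : Finset V, G.IsIndepSet (s : Set V) → #s ≤ k) :
    ((Fintype.card V ⌈/⌉ k : ℕ) : ℕ∞) ≤ G.chromaticNumber := by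
  classical
  refine le_chromaticNumber_iff_coloring.2 fun m C => ?_
  rw [ceilDiv_le_iff_le_mul hk]
  calc Fintype.card V = #(univ : Finset V) := rfl
    _ ≤ k * #(univ : Finset (Fin m)) :=
      card_le_mul_card_image_of_maps_to (fun v _ => mem_univ (C v)) k fun c _ =>
        h _ (by simpa [Coloring.colorClass] using C.isIndepSet_colorClass c)
    _ = k * m := by simp

namespace IsCliqueBlowup

variable {F : SimpleGraph W} {G : SimpleGraph V} {H : SimpleGraph α} {f : V → α}

theorem comp (h : IsCliqueBlowup G H f) (φ : F ↪g G) : IsCliqueBlowup F H (f ∘ φ) := fun i j => by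
  rw [← φ.map_adj_iff, h, φ.injective.ne_iff, Function.comp_apply, Function.comp_apply]

theorem inducedFree (h : IsCliqueBlowup G H f) (hF : ∀ g, ¬ IsCliqueBlowup F H g) :
    InducedFree F G :=
  fun ⟨φ⟩ => hF _ (h.comp φ)

theorem isClique_image (h : IsCliqueBlowup G H f) {s : Set V} (hs : G.IsClique s) :
    H.IsClique (f '' s) := by
  rintro _ ⟨u, hu, rfl⟩ _ ⟨v, hv, rfl⟩ hne
  exact (((h u v).1 (hs hu hv (ne_of_apply_ne f hne))).2).resolve_left hne

theorem isClique_preimage (h : IsCliqueBlowup G H f) {T : Set α} (hT : H.IsClique T) :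
    G.IsClique (f ⁻¹' T) := by
  intro u hu v hv huv
  refine (h u v).2 ⟨huv, ?_⟩
  by_cases hf : f u = f v
  · exact .inl hf
  · exact .inr (hT hu hv hf)

theorem injOn_of_isIndepSet (h : IsCliqueBlowup G H f) {s : Set V} (hs : G.IsIndepSet s) :
    Set.InjOn f s := by
  intro u hu v hv hf
  by_contra huv
  exact hs hu hv huv ((h u v).2 ⟨huv, .inl hf⟩)

theorem isIndepSet_image (h : IsCliqueBlowup G H f) {s : Set V} (hs : G.IsIndepSet s) :
    H.IsIndepSet (f '' s) := by
  rintro _ ⟨u, hu, rfl⟩ _ ⟨v, hv, rfl⟩ hne hH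
  exact hs hu hv (ne_of_apply_ne f hne) ((h u v).2 ⟨ne_of_apply_ne f hne, .inr hH⟩)

variable [Fintype V] [Fintype α] [DecidableEq α] {q : ℕ}

theorem cliqueNum_eq (h : IsCliqueBlowup G H f) (hq : ∀ a, #{v | f v = a} = q) :
    G.cliqueNum = q * H.cliqueNum := by
  classical
  apply le_antisymm
  · obtain ⟨s, hs⟩ := G.exists_isNClique_cliqueNum
    have himage : H.IsClique (s.image f : Set α) := by
      simpa using h.isClique_image hs.isClique
    calc G.cliqueNum = #s := hs.card_eq.symm
      _ ≤ q * #(s.image f) := card_le_mul_card_image_of_card_fiber hq s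
      _ ≤ q * H.cliqueNum := Nat.mul_le_mul_left _ himage.card_le_cliqueNum
  · obtain ⟨T, hT⟩ := H.exists_isNClique_cliqueNum
    have hpre : G.IsClique ({v | f v ∈ T} : Finset V) := by
      convert h.isClique_preimage hT.isClique
      ext
      simp
    calc q * H.cliqueNum = #{v | f v ∈ T} := by
          rw [card_filter_mem_eq_mul hq, hT.card_eq, mul_comm]
      _ ≤ G.cliqueNum := hpre.card_le_cliqueNum

theorem degree_eq [DecidableRel G.Adj] [DecidableRel H.Adj] (h : IsCliqueBlowup G H f)
    (hq : ∀ a, #{v | f v = a} = q) (v : V) :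
    G.degree v = (H.degree (f v) + 1) * q - 1 := by
  classical
  have hnbr : G.neighborFinset v =
      ({u | f u ∈ insert (f v) (H.neighborFinset (f v))} : Finset V).erase v := by
    ext u
    simp only [mem_neighborFinset, h v u, mem_erase, mem_filter, mem_univ, true_and, mem_insert]
    exact and_congr (not_congr eq_comm) (or_congr_left eq_comm)
  rw [← card_neighborFinset_eq_degree, hnbr, card_erase_of_mem (by simp),
    card_filter_mem_eq_mul hq, card_insert_of_notMem (H.notMem_neighborFinset_self _),
    card_neighborFinset_eq_degree]

end IsCliqueBlowup

instance (n : ℕ) : DecidableRel (pathGraph n).Adj := fun _ _ =>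
  decidable_of_iff _ pathGraph_adj.symm

instance : DecidableRel gem.Adj := fun _ _ =>
  decidable_of_iff _ (fromEdgeSet_adj _).symm

theorem cycleGraph_five_adj {a b : Fin 5} : (cycleGraph 5).Adj a b ↔ b = a + 1 ∨ a = b + 1 := by
  revert a b
  decide

theorem card_le_two_of_isClique_cycleGraph_five (T : Finset (Fin 5))
    (hT : (cycleGraph 5).IsClique (T : Set (Fin 5))) : #T ≤ 2 := by
  revert T
  decide

theorem card_le_two_of_isIndepSet_cycleGraph_five (T : Finset (Fin 5))
    (hT : (cycleGraph 5).IsIndepSet (T : Set (Fin 5))) : #T ≤ 2 := by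
  revert T
  decide

theorem cliqueNum_cycleGraph_five : (cycleGraph 5).cliqueNum = 2 := by
  obtain ⟨T, hT⟩ := (cycleGraph 5).exists_isNClique_cliqueNum
  have hedge : (cycleGraph 5).IsClique (({0, 1} : Finset (Fin 5)) : Set (Fin 5)) := by decide
  exact le_antisymm (hT.card_eq ▸ card_le_two_of_isClique_cycleGraph_five T hT.isClique)
    hedge.card_le_cliqueNum

theorem not_isCliqueBlowup_pathGraph_cycleGraph :
    ∀ g : Fin 5 → Fin 5, ¬ IsCliqueBlowup (pathGraph 5) (cycleGraph 5) g := by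
  refine (FinVec.forall_iff _).1 ?_
  simp only [FinVec.Forall, IsCliqueBlowup]
  decide

theorem not_isCliqueBlowup_gem_cycleGraph :
    ∀ g : Fin 5 → Fin 5, ¬ IsCliqueBlowup gem (cycleGraph 5) g := by
  refine (FinVec.forall_iff _).1 ?_
  simp only [FinVec.Forall, IsCliqueBlowup]
  decide

end CliqueBlowup

theorem tightness_example_general {V : Type*} [Fintype V] (q : ℕ)
    (G : SimpleGraph V) [DecidableRel G.Adj] (f : V → Fin 5)
    (hcard : ∀ i : Fin 5, Nat.card {v : V // f v = i} = q)
    (hadj : ∀ u v : V, G.Adj u v ↔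
      u ≠ v ∧ (f u = f v ∨ f v = f u + 1 ∨ f u = f v + 1)) :
    P5GemFree G ∧ G.cliqueNum = 2 * q ∧ G.maxDegree = 3 * q - 1 ∧
      (¬ ∃ S : Finset V, S.card = 3 ∧ ∀ u ∈ S, ∀ v ∈ S, u ≠ v → ¬ G.Adj u v) ∧
      ((5 * q ⌈/⌉ 2 : ℕ) : ℕ∞) ≤ G.chromaticNumber := by
  classical
  have hG : IsCliqueBlowup G (cycleGraph 5) f := by
    simpa only [IsCliqueBlowup, cycleGraph_five_adj] using hadj
  have hfiber : ∀ i, #{v | f v = i} = q := fun i => by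
    rw [← hcard i, Nat.card_eq_fintype_card, Fintype.card_subtype]
  have hindep (s : Finset V) (hs : G.IsIndepSet (s : Set V)) : #s ≤ 2 := by
    rw [← card_image_of_injOn (hG.injOn_of_isIndepSet hs)]
    exact card_le_two_of_isIndepSet_cycleGraph_five _ (by simpa using hG.isIndepSet_image hs)
  have hregular : G.IsRegularOfDegree (3 * q - 1) := fun v => by
    rw [hG.degree_eq hfiber, cycleGraph_degree_three_le]
  have hcardV : Fintype.card V = 5 * q := by
    simpa using card_filter_mem_eq_mul hfiber univ
  refine ⟨⟨hG.inducedFree not_isCliqueBlowup_pathGraph_cycleGraph,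
    hG.inducedFree not_isCliqueBlowup_gem_cycleGraph⟩, ?_, ?_, ?_, ?_⟩
  · rw [hG.cliqueNum_eq hfiber, cliqueNum_cycleGraph_five, mul_comm]
  · rcases isEmpty_or_nonempty V with hV | hV
    · have hq : q = 0 := by simpa using hcardV.symm
      simp [hq, maxDegree_of_subsingleton]
    · exact hregular.maxDegree_eq
  · rintro ⟨S, hS, hSindep⟩
    have := hindep S fun u hu v hv huv => hSindep u hu v hv huv
    omega
  · rw [← hcardV]
    exact ceilDiv_card_le_chromaticNumber two_pos hindep

/-- The tightness example: a graph `G` whose vertex set is partitioned (by `f`) into five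
cliques `Q_0, …, Q_4`, each of size `q ≥ 1`, where each `Q_i` is complete to
`Q_{i+1} ∪ Q_{i-1}` and anticomplete to `Q_{i+2} ∪ Q_{i-2}` (indices mod 5).
Then `G` is (P5, gem)-free, `ω(G) = 2q`, `Δ(G) = 3q - 1`, `G` has no stable set of size 3,
and hence `χ(G) ≥ ⌈5q/2⌉`. -/
theorem tightness_example {V : Type*} [Fintype V] (q : ℕ) (hq : 1 ≤ q)
    (G : SimpleGraph V) [DecidableRel G.Adj] (f : V → Fin 5)
    (hcard : ∀ i : Fin 5, Nat.card {v : V // f v = i} = q)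
    (hadj : ∀ u v : V, G.Adj u v ↔
      u ≠ v ∧ (f u = f v ∨ f v = f u + 1 ∨ f u = f v + 1)) :
    P5GemFree G ∧ G.cliqueNum = 2 * q ∧ G.maxDegree = 3 * q - 1 ∧
      (¬ ∃ S : Finset V, S.card = 3 ∧ ∀ u ∈ S, ∀ v ∈ S, u ≠ v → ¬ G.Adj u v) ∧
      ((5 * q ⌈/⌉ 2 : ℕ) : ℕ∞) ≤ G.chromaticNumber :=
  tightness_example_general q G f hcard hadj
end

section
/- Let H be a (P5, gem)-free graph and let G be a P4-free expansion of H. Then G is (P5, gem)-free. -/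
/-!
Take an induced copy `e` of `P ∈ {P5, gem}` in the expansion `G`. If `e` meets every class `Q_w`
at most once, composing with the projection `f` gives an induced copy of `P` in `H`. Otherwise the
vertices of `P` that `e` sends to one class form a module of `P` (every other vertex sees all or
none of them) with at least two vertices. Every such module of `P5` or of the gem induces a `P4`,
a finite check, and `e` carries it into a single class, which is `P4`-free.
-/

open SimpleGraph

namespace SimpleGraph

variable {α V W : Type*}

def IsModule (P : SimpleGraph α) (s : Set α) : Prop :=
  ∀ k ∉ s, ∀ a ∈ s, ∀ b ∈ s, P.Adj k a ↔ P.Adj k b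

instance [Fintype α] [DecidableEq α] (P : SimpleGraph α) [DecidableRel P.Adj] (s : Finset α) :
    Decidable (P.IsModule s) :=
  inferInstanceAs (Decidable (∀ k ∉ s, ∀ a ∈ s, ∀ b ∈ s, P.Adj k a ↔ P.Adj k b))

def ModulesInduceP4 (P : SimpleGraph α) : Prop :=
  ∀ s : Set α, s.Nontrivial → P.IsModule s → pathGraph 4 ⊴ P.induce s

lemma modulesInduceP4_of_forall_finset [Fintype α] {P : SimpleGraph α}
    (h : ∀ s : Finset α, 1 < s.card → P.IsModule s → ∃ ι : Fin 4 → α, Function.Injective ι ∧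
      (∀ a, ι a ∈ s) ∧ ∀ a b, P.Adj (ι a) (ι b) ↔ (pathGraph 4).Adj a b) :
    P.ModulesInduceP4 := by
  classical
  intro s hs hmod
  have hcard : 1 < s.toFinset.card :=
    Finset.one_lt_card_iff_nontrivial.2 (Set.toFinset_nontrivial.2 hs)
  obtain ⟨ι, hinj, hmem, hadj⟩ := h s.toFinset hcard (by rwa [Set.coe_toFinset])
  exact ⟨⟨⟨fun a => ⟨ι a, Set.mem_toFinset.1 (hmem a)⟩,
    fun a b hab => hinj (congrArg Subtype.val hab)⟩, hadj _ _⟩⟩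

instance (n : ℕ) : DecidableRel (pathGraph n).Adj :=
  fun _ _ => decidable_of_iff _ pathGraph_adj.symm

lemma gem_adj_iff {u v : Fin 5} : gem.Adj u v ↔ u ≠ v ∧ (s(u, v) = s(0, 1) ∨ s(u, v) = s(1, 2) ∨
    s(u, v) = s(2, 3) ∨ s(u, v) = s(4, 0) ∨ s(u, v) = s(4, 1) ∨ s(u, v) = s(4, 2) ∨
    s(u, v) = s(4, 3)) := by
  simp [gem, and_comm]

instance : DecidableRel gem.Adj := fun _ _ => decidable_of_iff _ gem_adj_iff.symm

lemma pathGraph_five_modulesInduceP4 : (pathGraph 5).ModulesInduceP4 :=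
  modulesInduceP4_of_forall_finset (by decide)

lemma gem_modulesInduceP4 : gem.ModulesInduceP4 :=
  modulesInduceP4_of_forall_finset (by decide)

lemma Embedding.induce_isIndContained {P : SimpleGraph α} {G : SimpleGraph V} (e : P ↪g G)
    {s : Set α} {t : Set V} (hst : Set.MapsTo e s t) : P.induce s ⊴ G.induce t :=
  ⟨⟨⟨hst.restrict, (Set.MapsTo.restrict_inj hst).2 e.injective.injOn⟩, e.map_adj_iff⟩⟩

section Expansion

variable {P : SimpleGraph α} {H : SimpleGraph W} {G : SimpleGraph V} {f : V → W}

lemma isIndContained_of_injective_comp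
    (hcross : ∀ u v : V, f u ≠ f v → (G.Adj u v ↔ H.Adj (f u) (f v)))
    (e : P ↪g G) (hinj : (f ∘ e).Injective) : P ⊴ H := by
  refine ⟨⟨⟨f ∘ e, hinj⟩, fun {a b} => ?_⟩⟩
  obtain rfl | hab := eq_or_ne a b
  · simp
  · rw [← e.map_adj_iff, hcross _ _ (hinj.ne hab)]
    rfl

lemma isModule_setOf_comp_eq
    (hcross : ∀ u v : V, f u ≠ f v → (G.Adj u v ↔ H.Adj (f u) (f v)))
    (e : P ↪g G) (w : W) : P.IsModule {k | f (e k) = w} := by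
  intro k hk a (ha : f (e a) = w) b (hb : f (e b) = w)
  rw [← e.map_adj_iff, ← e.map_adj_iff, hcross _ _ (ha ▸ hk), hcross _ _ (hb ▸ hk), ha, hb]

theorem inducedFree_of_expansion (hP : P.ModulesInduceP4)
    (hcross : ∀ u v : V, f u ≠ f v → (G.Adj u v ↔ H.Adj (f u) (f v)))
    (hfiber : ∀ w : W, InducedFree (pathGraph 4) (G.induce {v | f v = w}))
    (hPH : InducedFree P H) : InducedFree P G := by
  rintro ⟨e⟩
  by_cases hinj : (f ∘ e).Injective
  · exact hPH (isIndContained_of_injective_comp hcross e hinj)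
  obtain ⟨i, j, hij, hne⟩ := Function.not_injective_iff.1 hinj
  have hP4 := hP {k | f (e k) = f (e i)} ⟨i, rfl, j, hij.symm, hne⟩
    (isModule_setOf_comp_eq hcross e _)
  exact hfiber _ (hP4.trans (e.induce_isIndContained fun _ hk => hk))

end Expansion

end SimpleGraph

theorem p4FreeExpansion_p5GemFree_general {V W : Type*}
    (H : SimpleGraph W) (G : SimpleGraph V) (hH : P5GemFree H)
    (f : V → W)
    (hcross : ∀ u v : V, f u ≠ f v → (G.Adj u v ↔ H.Adj (f u) (f v)))
    (hfiber : ∀ w : W, InducedFree (SimpleGraph.pathGraph 4) (G.induce {v | f v = w})) :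
    P5GemFree G :=
  ⟨inducedFree_of_expansion pathGraph_five_modulesInduceP4 hcross hfiber hH.1,
    inducedFree_of_expansion gem_modulesInduceP4 hcross hfiber hH.2⟩

/-- Any P4-free expansion `G` of a (P5, gem)-free graph `H` is (P5, gem)-free. The expansion is
given by a surjection `f : V → W`; its fibers `Q_w = f⁻¹(w)` are the (non-empty) expansion sets,
each inducing a P4-free graph, and for vertices in distinct fibers adjacency in `G` is governed
by adjacency in `H`. -/
theorem p4FreeExpansion_p5GemFree {V W : Type*} [Fintype V] [Fintype W]
    (H : SimpleGraph W) (G : SimpleGraph V) (hH : P5GemFree H)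
    (f : V → W) (hsurj : Function.Surjective f)
    (hcross : ∀ u v : V, f u ≠ f v → (G.Adj u v ↔ H.Adj (f u) (f v)))
    (hfiber : ∀ w : W, InducedFree (SimpleGraph.pathGraph 4) (G.induce {v | f v = w})) :
    P5GemFree G :=
  p4FreeExpansion_p5GemFree_general H G hH f hcross hfiber
end

section
/- With the standard setup, every vertex of G lies in A_1 ∪ ⋯ ∪ A_5 ∪ Y_1 ∪ ⋯ ∪ Y_5 ∪ R; that is, V(G) = A ∪ Y_1 ∪ ⋯ ∪ Y_5 ∪ R. -/
/-!
Let `x ∉ A` have a neighbour in `A`. Vertices `a ∈ A j`, `b ∈ A (j+1)`, `c ∈ A (j+2)`,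
`d ∈ A (j+3)` always form an induced `P4`. Hence P5-freeness forces `x`, once adjacent to some
`a ∈ A j`, to be complete to one of the three classes following `j` (and, reading the `P4`
backwards, to one of the three preceding it), while gem-freeness forbids neighbours in four
consecutive classes. If `x` were complete to `A (k ± 1)` and anticomplete to `A (k ± 2)`, it
could be added to `A k`, contradicting maximality. A finite check over the `2 ^ 10` possible
"neighbour in / complete to `A i`" patterns shows that these constraints leave only the patterns
defining the sets `Y k`.
-/

open SimpleGraph

/-- `X` is complete to `Y`: every vertex of `X` is adjacent to every vertex of `Y`. -/
def CompleteTo {V : Type*} (G : SimpleGraph V) (X Y : Set V) : Prop :=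
  ∀ x ∈ X, ∀ y ∈ Y, G.Adj x y

/-- `X` is anticomplete to `Y`: no vertex of `X` is adjacent to any vertex of `Y`. -/
def AnticompleteTo {V : Type*} (G : SimpleGraph V) (X Y : Set V) : Prop :=
  ∀ x ∈ X, ∀ y ∈ Y, ¬ G.Adj x y

/-- `X` is a homogeneous set: every vertex outside `X` with a neighbor in `X` is
complete to `X`. -/
def IsHomogeneousSet {V : Type*} (G : SimpleGraph V) (X : Set V) : Prop :=
  ∀ v ∉ X, (∃ x ∈ X, G.Adj v x) → ∀ x ∈ X, G.Adj v x

/-- Five nonempty pairwise disjoint sets `A 0, …, A 4` such that (indices mod 5) each `A i` is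
complete to `A (i-1) ∪ A (i+1)` and anticomplete to `A (i-2) ∪ A (i+2)`. -/
structure IsC5Partition {V : Type*} (G : SimpleGraph V) (A : Fin 5 → Set V) : Prop where
  nonempty : ∀ i, (A i).Nonempty
  disjoint : ∀ i j, i ≠ j → Disjoint (A i) (A j)
  complete_succ : ∀ i, CompleteTo G (A i) (A (i + 1))
  complete_pred : ∀ i, CompleteTo G (A i) (A (i - 1))
  anticomplete_succ : ∀ i, AnticompleteTo G (A i) (A (i + 2))
  anticomplete_pred : ∀ i, AnticompleteTo G (A i) (A (i - 2))

/-- The set `Y_i`: vertices outside `A` that are complete to `A i`, anticomplete to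
`A (i-1) ∪ A (i+1)`, have a neighbor in each of `A (i-2)` and `A (i+2)`, and are complete
to at least one of `A (i-2)`, `A (i+2)`. -/
def Yset {V : Type*} (G : SimpleGraph V) (A : Fin 5 → Set V) (i : Fin 5) : Set V :=
  {x | x ∉ (⋃ j, A j) ∧ (∀ a ∈ A i, G.Adj x a) ∧
    (∀ a ∈ A (i - 1), ¬ G.Adj x a) ∧ (∀ a ∈ A (i + 1), ¬ G.Adj x a) ∧
    (∃ a ∈ A (i - 2), G.Adj x a) ∧ (∃ a ∈ A (i + 2), G.Adj x a) ∧
    ((∀ a ∈ A (i - 2), G.Adj x a) ∨ (∀ a ∈ A (i + 2), G.Adj x a))}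

/-- The set `R`: vertices outside `A = ⋃ A i` with no neighbor in `A`. -/
def Rset {V : Type*} (G : SimpleGraph V) (A : Fin 5 → Set V) : Set V :=
  {x | x ∉ (⋃ j, A j) ∧ ∀ a ∈ ⋃ j, A j, ¬ G.Adj x a}

/-- A vertex of `Y_i` is pure if it is complete to `A (i-2) ∪ A (i+2)`. -/
def IsPureVertex {V : Type*} (G : SimpleGraph V) (A : Fin 5 → Set V) (i : Fin 5) (x : V) : Prop :=
  (∀ a ∈ A (i - 2), G.Adj x a) ∧ (∀ a ∈ A (i + 2), G.Adj x a)

open Set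

theorem nonempty_embedding_of_adj_iff {W V : Type*} {H : SimpleGraph W} {G : SimpleGraph V}
    (f : W → V) (hsep : ∀ a b, a ≠ b → ∃ c, ¬ (H.Adj c a ↔ H.Adj c b))
    (hf : ∀ a b, G.Adj (f a) (f b) ↔ H.Adj a b) : Nonempty (H ↪g G) := by
  refine ⟨⟨⟨f, fun a b hab => ?_⟩, hf _ _⟩⟩
  by_contra hne
  obtain ⟨c, hc⟩ := hsep a b hne
  exact hc (by rw [← hf, ← hf, hab])

def IsInducedPath4 {V : Type*} (G : SimpleGraph V) (a b c d : V) : Prop :=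
  G.Adj a b ∧ G.Adj b c ∧ G.Adj c d ∧ ¬ G.Adj a c ∧ ¬ G.Adj a d ∧ ¬ G.Adj b d

section InducedPath4

variable {V : Type*} {G : SimpleGraph V} {a b c d x : V}

theorem IsInducedPath4.reverse (h : IsInducedPath4 G a b c d) : IsInducedPath4 G d c b a := by
  obtain ⟨hab, hbc, hcd, hac, had, hbd⟩ := h
  exact ⟨hcd.symm, hbc.symm, hab.symm, fun h => hbd h.symm, fun h => had h.symm,
    fun h => hac h.symm⟩

theorem InducedFree.adj_of_isInducedPath4 (hfree : InducedFree (pathGraph 5) G)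
    (h : IsInducedPath4 G a b c d) (hxa : G.Adj x a) :
    G.Adj x b ∨ G.Adj x c ∨ G.Adj x d := by
  by_contra! hx
  obtain ⟨hxb, hxc, hxd⟩ := hx
  obtain ⟨hab, hbc, hcd, hac, had, hbd⟩ := h
  refine hfree (nonempty_embedding_of_adj_iff ![x, a, b, c, d]
    (by simp only [pathGraph_adj]; decide) fun i j => ?_)
  fin_cases i <;> fin_cases j <;>
    simp [pathGraph_adj, hab, hbc, hcd, hac, had, hbd, hxa, hxb, hxc, hxd, hab.symm, hbc.symm,
      hcd.symm, hxa.symm, G.adj_comm _ x, G.adj_comm c a, G.adj_comm d a, G.adj_comm d b]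

theorem InducedFree.not_adj_of_isInducedPath4 (hfree : InducedFree gem G)
    (h : IsInducedPath4 G a b c d) (hxa : G.Adj x a) (hxb : G.Adj x b) (hxc : G.Adj x c) :
    ¬ G.Adj x d := by
  intro hxd
  obtain ⟨hab, hbc, hcd, hac, had, hbd⟩ := h
  refine hfree (nonempty_embedding_of_adj_iff ![a, b, c, d, x]
    (by simp only [gem, fromEdgeSet_adj, mem_insert_iff, mem_singleton_iff]; decide)
    fun i j => ?_)
  fin_cases i <;> fin_cases j <;>
    simp [gem, hab, hbc, hcd, hac, had, hbd, hab.symm, hbc.symm, hcd.symm, hxa.symm, hxb.symm,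
      hxc.symm, hxd.symm, hxa, hxb, hxc, hxd, G.adj_comm c a, G.adj_comm d a, G.adj_comm d b]

end InducedPath4

theorem exists_Y_pattern (P C : Fin 5 → Prop) (hCP : ∀ i, C i → P i) (hP : ∃ i, P i)
    (hfwd : ∀ j, P j → C (j + 1) ∨ C (j + 2) ∨ C (j + 3))
    (hbwd : ∀ j, P j → C (j - 1) ∨ C (j - 2) ∨ C (j - 3))
    (hgem : ∀ j, ¬ (P j ∧ P (j + 1) ∧ P (j + 2) ∧ P (j + 3)))
    (hmax : ∀ k, C (k - 1) → C (k + 1) → P (k - 2) ∨ P (k + 2)) :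
    ∃ k, C k ∧ ¬ P (k - 1) ∧ ¬ P (k + 1) ∧ P (k - 2) ∧ P (k + 2) ∧ (C (k - 2) ∨ C (k + 2)) := by
  have key : ∀ p c : Fin 5 → Bool, (∀ i, c i → p i) → (∃ i, p i) →
      (∀ j, p j → c (j + 1) ∨ c (j + 2) ∨ c (j + 3)) →
      (∀ j, p j → c (j - 1) ∨ c (j - 2) ∨ c (j - 3)) →
      (∀ j, ¬ (p j ∧ p (j + 1) ∧ p (j + 2) ∧ p (j + 3))) →
      (∀ k, c (k - 1) → c (k + 1) → p (k - 2) ∨ p (k + 2)) →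
      ∃ k, c k ∧ ¬ p (k - 1) ∧ ¬ p (k + 1) ∧ p (k - 2) ∧ p (k + 2) ∧
        (c (k - 2) ∨ c (k + 2)) := by
    decide
  classical
  have := key (fun i => decide (P i)) (fun i => decide (C i))
  simp only [decide_eq_true_eq] at this
  exact this hCP hP hfwd hbwd hgem hmax

namespace IsC5Partition

variable {V : Type*} {G : SimpleGraph V} {A : Fin 5 → Set V} {x : V}

theorem of_succ (nonempty : ∀ i, (A i).Nonempty)
    (disjoint : ∀ i j, i ≠ j → Disjoint (A i) (A j))
    (complete_succ : ∀ i, CompleteTo G (A i) (A (i + 1)))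
    (anticomplete_succ : ∀ i, AnticompleteTo G (A i) (A (i + 2))) : IsC5Partition G A where
  nonempty := nonempty
  disjoint := disjoint
  complete_succ := complete_succ
  complete_pred i a ha b hb := (complete_succ (i - 1) b hb a (by rwa [sub_add_cancel])).symm
  anticomplete_succ := anticomplete_succ
  anticomplete_pred i a ha b hb hab :=
    anticomplete_succ (i - 2) b hb a (by rwa [sub_add_cancel]) hab.symm

theorem isInducedPath4 (hA : IsC5Partition G A) {j : Fin 5} {a b c d : V} (ha : a ∈ A j) (hb : b ∈ A (j + 1))
    (hc : c ∈ A (j + 2)) (hd : d ∈ A (j + 3)) : IsInducedPath4 G a b c d :=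
  ⟨hA.complete_succ j a ha b hb,
    hA.complete_succ (j + 1) b hb c (by rwa [show j + 1 + 1 = j + 2 by omega]),
    hA.complete_succ (j + 2) c hc d (by rwa [show j + 2 + 1 = j + 3 by omega]),
    hA.anticomplete_succ j a ha c hc,
    hA.anticomplete_pred j a ha d (by rwa [show j - 2 = j + 3 by omega]),
    hA.anticomplete_succ (j + 1) b hb d (by rwa [show j + 1 + 2 = j + 3 by omega])⟩

theorem isInducedPath4_pred (hA : IsC5Partition G A) {j : Fin 5} {a b c d : V} (ha : a ∈ A j) (hb : b ∈ A (j - 1))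
    (hc : c ∈ A (j - 2)) (hd : d ∈ A (j - 3)) : IsInducedPath4 G a b c d :=
  (hA.isInducedPath4 hd (by rwa [show j - 3 + 1 = j - 2 by omega])
    (by rwa [show j - 3 + 2 = j - 1 by omega]) (by rwa [show j - 3 + 3 = j by omega])).reverse

theorem mem_update_insert {k i : Fin 5} {y : V} :
    y ∈ Function.update A k (insert x (A k)) i ↔ (i = k ∧ y = x) ∨ y ∈ A i := by
  rcases eq_or_ne i k with rfl | hik <;> simp [*]

theorem update_insert (hA : IsC5Partition G A) {k : Fin 5} (hx : x ∉ ⋃ j, A j)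
    (hpred : ∀ a ∈ A (k - 1), G.Adj x a) (hsucc : ∀ a ∈ A (k + 1), G.Adj x a)
    (hpred₂ : ∀ a ∈ A (k - 2), ¬ G.Adj x a) (hsucc₂ : ∀ a ∈ A (k + 2), ¬ G.Adj x a) :
    IsC5Partition G (Function.update A k (insert x (A k))) := by
  refine of_succ (fun i => (hA.nonempty i).mono fun y hy => mem_update_insert.2 (.inr hy))
    (fun i j hij => Set.disjoint_left.2 fun y hyi hyj => ?_) (fun i a ha b hb => ?_)
    (fun i a ha b hb => ?_)
  · rw [mem_update_insert] at hyi hyj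
    rcases hyi with ⟨rfl, rfl⟩ | hyi <;> rcases hyj with ⟨rfl, hyx⟩ | hyj
    · exact hij rfl
    · exact hx (mem_iUnion_of_mem j hyj)
    · exact hx (hyx ▸ mem_iUnion_of_mem i hyi)
    · exact Set.disjoint_left.1 (hA.disjoint i j hij) hyi hyj
  · rw [mem_update_insert] at ha hb
    rcases ha with ⟨rfl, rfl⟩ | ha <;> rcases hb with ⟨hik, rfl⟩ | hb
    · simp at hik
    · exact hsucc b hb
    · obtain rfl : i = k - 1 := by omega
      exact (hpred a ha).symm
    · exact hA.complete_succ i a ha b hb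
  · rw [mem_update_insert] at ha hb
    rcases ha with ⟨rfl, rfl⟩ | ha <;> rcases hb with ⟨hik, rfl⟩ | hb
    · simp at hik
    · exact hsucc₂ b hb
    · obtain rfl : i = k - 2 := by omega
      exact fun hax => hpred₂ a ha hax.symm
    · exact hA.anticomplete_succ i a ha b hb

theorem ssubset_iUnion_update_insert (hx : x ∉ ⋃ j, A j) (k : Fin 5) :
    (⋃ j, A j) ⊂ ⋃ j, Function.update A k (insert x (A k)) j :=
  (Set.ssubset_iff_of_subset (iUnion_mono fun _ _ hy => mem_update_insert.2 (.inr hy))).2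
    ⟨x, mem_iUnion_of_mem k (mem_update_insert.2 (.inl ⟨rfl, rfl⟩)), hx⟩

theorem complete_succ_of_adj (hA : IsC5Partition G A) (hfree : InducedFree (pathGraph 5) G)
    {j : Fin 5} (hx : ∃ a ∈ A j, G.Adj x a) :
    (∀ b ∈ A (j + 1), G.Adj x b) ∨ (∀ c ∈ A (j + 2), G.Adj x c) ∨
      (∀ d ∈ A (j + 3), G.Adj x d) := by
  obtain ⟨a, ha, hxa⟩ := hx
  by_contra! h
  obtain ⟨⟨b, hb, hxb⟩, ⟨c, hc, hxc⟩, ⟨d, hd, hxd⟩⟩ := h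
  rcases hfree.adj_of_isInducedPath4 (hA.isInducedPath4 ha hb hc hd) hxa with h | h | h <;>
    contradiction

theorem complete_pred_of_adj (hA : IsC5Partition G A) (hfree : InducedFree (pathGraph 5) G)
    {j : Fin 5} (hx : ∃ a ∈ A j, G.Adj x a) :
    (∀ b ∈ A (j - 1), G.Adj x b) ∨ (∀ c ∈ A (j - 2), G.Adj x c) ∨
      (∀ d ∈ A (j - 3), G.Adj x d) := by
  obtain ⟨a, ha, hxa⟩ := hx
  by_contra! h
  obtain ⟨⟨b, hb, hxb⟩, ⟨c, hc, hxc⟩, ⟨d, hd, hxd⟩⟩ := h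
  rcases hfree.adj_of_isInducedPath4 (hA.isInducedPath4_pred ha hb hc hd) hxa with h | h | h <;>
    contradiction

theorem not_adj_four_consecutive (hA : IsC5Partition G A) (hfree : InducedFree gem G)
    (j : Fin 5) :
    ¬ ((∃ a ∈ A j, G.Adj x a) ∧ (∃ b ∈ A (j + 1), G.Adj x b) ∧ (∃ c ∈ A (j + 2), G.Adj x c) ∧
      (∃ d ∈ A (j + 3), G.Adj x d)) := by
  rintro ⟨⟨a, ha, hxa⟩, ⟨b, hb, hxb⟩, ⟨c, hc, hxc⟩, ⟨d, hd, hxd⟩⟩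
  exact hfree.not_adj_of_isInducedPath4 (hA.isInducedPath4 ha hb hc hd) hxa hxb hxc hxd

theorem adj_pred₂_or_succ₂_of_maximal (hA : IsC5Partition G A)
    (hmax : ∀ B : Fin 5 → Set V, IsC5Partition G B → ¬ (⋃ i, A i) ⊂ (⋃ i, B i))
    (hx : x ∉ ⋃ j, A j) {k : Fin 5} (hpred : ∀ a ∈ A (k - 1), G.Adj x a)
    (hsucc : ∀ a ∈ A (k + 1), G.Adj x a) :
    (∃ a ∈ A (k - 2), G.Adj x a) ∨ (∃ a ∈ A (k + 2), G.Adj x a) := by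
  by_contra! h
  exact hmax _ (hA.update_insert hx hpred hsucc h.1 h.2) (ssubset_iUnion_update_insert hx k)

theorem exists_mem_Yset (hA : IsC5Partition G A) (hfree : P5GemFree G)
    (hmax : ∀ B : Fin 5 → Set V, IsC5Partition G B → ¬ (⋃ i, A i) ⊂ (⋃ i, B i))
    (hx : x ∉ ⋃ j, A j) (hadj : ∃ i, ∃ a ∈ A i, G.Adj x a) : ∃ k, x ∈ Yset G A k := by
  obtain ⟨k, hk, hpred, hsucc, hpred₂, hsucc₂, hcomplete⟩ :=
    exists_Y_pattern (fun i => ∃ a ∈ A i, G.Adj x a) (fun i => ∀ a ∈ A i, G.Adj x a)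
      (fun i h => (hA.nonempty i).imp fun a ha => ⟨ha, h a ha⟩) hadj
      (fun _ => hA.complete_succ_of_adj hfree.1) (fun _ => hA.complete_pred_of_adj hfree.1)
      (hA.not_adj_four_consecutive hfree.2) (fun _ => hA.adj_pred₂_or_succ₂_of_maximal hmax hx)
  exact ⟨k, hx, hk, fun a ha hxa => hpred ⟨a, ha, hxa⟩, fun a ha hxa => hsucc ⟨a, ha, hxa⟩,
    hpred₂, hsucc₂, hcomplete⟩

end IsC5Partition

theorem vertex_partition_general {V : Type*} (G : SimpleGraph V)
    (hfree : P5GemFree G)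
    (A : Fin 5 → Set V) (hA : IsC5Partition G A)
    (hmax : ∀ B : Fin 5 → Set V, IsC5Partition G B → ¬ (⋃ i, A i) ⊂ (⋃ i, B i)) :
    ∀ x : V, x ∈ (⋃ i, A i) ∪ (⋃ i, Yset G A i) ∪ Rset G A := by
  intro x
  by_cases hxA : x ∈ ⋃ i, A i
  · exact .inl (.inl hxA)
  by_cases hadj : ∃ i, ∃ a ∈ A i, G.Adj x a
  · obtain ⟨k, hk⟩ := hA.exists_mem_Yset hfree hmax hxA hadj
    exact .inl (.inr (mem_iUnion_of_mem k hk))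
  · refine .inr ⟨hxA, fun a ha hxa => hadj ?_⟩
    obtain ⟨i, hi⟩ := mem_iUnion.1 ha
    exact ⟨i, a, hi, hxa⟩

/-- Claim 2.1: every vertex of `G` lies in `A ∪ Y_1 ∪ ⋯ ∪ Y_5 ∪ R`. -/
theorem vertex_partition {V : Type*} [Fintype V] (G : SimpleGraph V)
    (hconn : G.Connected) (hfree : P5GemFree G)
    (hC5 : Nonempty (SimpleGraph.cycleGraph 5 ↪g G))
    (A : Fin 5 → Set V) (hA : IsC5Partition G A)
    (hmax : ∀ B : Fin 5 → Set V, IsC5Partition G B → ¬ (⋃ i, A i) ⊂ (⋃ i, B i)) :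
    ∀ x : V, x ∈ (⋃ i, A i) ∪ (⋃ i, Yset G A i) ∪ Rset G A :=
  vertex_partition_general G hfree A hA hmax
end

section
/- With the standard setup, for each i (mod 5) the subgraphs of G induced by A_i and by Y_i are P4-free. -/
open SimpleGraph

theorem gem_adj_castSucc_castSucc (j k : Fin 4) :
    gem.Adj j.castSucc k.castSucc ↔ (pathGraph 4).Adj j k := by
  fin_cases j <;> fin_cases k <;> simp [gem, pathGraph_adj, Fin.ext_iff]

theorem gem_adj_last_castSucc (j : Fin 4) : gem.Adj (Fin.last 4) j.castSucc := by
  fin_cases j <;> simp [gem]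

theorem exists_gem_embedding_of_dominated {V : Type*} {G : SimpleGraph V} {S : Set V} {a : V}
    (ha : a ∉ S) (hdom : ∀ s ∈ S, G.Adj a s) (f : pathGraph 4 ↪g G.induce S) :
    Nonempty (gem ↪g G) := by
  let g : Fin 5 → V := Fin.lastCases a fun j => f j
  have hg_last : g (Fin.last 4) = a := Fin.lastCases_last
  have hg_castSucc (j : Fin 4) : g j.castSucc = f j := Fin.lastCases_castSucc _
  have hne (j : Fin 4) : (f j : V) ≠ a := fun h => ha (h ▸ (f j).2)
  refine ⟨⟨⟨g, fun x y hxy => ?_⟩, fun {x y} => ?_⟩⟩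
  · induction x using Fin.lastCases <;> induction y using Fin.lastCases <;>
      simp_all [f.injective.eq_iff, ← Subtype.ext_iff]
  · change G.Adj (g x) (g y) ↔ gem.Adj x y
    induction x using Fin.lastCases <;> induction y using Fin.lastCases <;>
      simp only [hg_last, hg_castSucc, gem_adj_castSucc_castSucc, gem_adj_last_castSucc,
        (gem_adj_last_castSucc _).symm, hdom _ (f _).2, (hdom _ (f _).2).symm, ← f.map_adj_iff,
        G.irrefl, gem.irrefl, comap_adj, Function.Embedding.subtype_apply]

theorem induce_pathGraph_four_free_of_dominated {V : Type*} {G : SimpleGraph V} {S : Set V}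
    {a : V} (hgem : InducedFree gem G) (ha : a ∉ S) (hdom : ∀ s ∈ S, G.Adj a s) :
    InducedFree (pathGraph 4) (G.induce S) :=
  fun ⟨f⟩ => hgem (exists_gem_embedding_of_dominated ha hdom f)

theorem ai_yi_p4free_general {V : Type*} (G : SimpleGraph V)
    (hfree : P5GemFree G)
    (A : Fin 5 → Set V) (hA : IsC5Partition G A) :
    ∀ i : Fin 5, InducedFree (SimpleGraph.pathGraph 4) (G.induce (A i)) ∧
      InducedFree (SimpleGraph.pathGraph 4) (G.induce (Yset G A i)) := by
  intro i
  obtain ⟨b, hb⟩ := hA.nonempty (i + 1)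
  obtain ⟨c, hc⟩ := hA.nonempty i
  constructor
  · have hb_notMem : b ∉ A i := fun hbi =>
      (hA.disjoint i (i + 1) (by simp)).ne_of_mem hbi hb rfl
    exact induce_pathGraph_four_free_of_dominated hfree.2 hb_notMem
      fun s hs => hA.complete_succ i s hs b hb |>.symm
  · have hc_notMem : c ∉ Yset G A i := fun hcY => hcY.1 (Set.mem_iUnion_of_mem i hc)
    exact induce_pathGraph_four_free_of_dominated hfree.2 hc_notMem fun s hs => (hs.2.1 c hc).symm

/-- Claim 2.2: for each `i`, the subgraphs induced by `A i` and by `Y i` are P4-free. -/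
theorem ai_yi_p4free {V : Type*} [Fintype V] (G : SimpleGraph V)
    (hconn : G.Connected) (hfree : P5GemFree G)
    (hC5 : Nonempty (SimpleGraph.cycleGraph 5 ↪g G))
    (A : Fin 5 → Set V) (hA : IsC5Partition G A)
    (hmax : ∀ B : Fin 5 → Set V, IsC5Partition G B → ¬ (⋃ i, A i) ⊂ (⋃ i, B i)) :
    ∀ i : Fin 5, InducedFree (SimpleGraph.pathGraph 4) (G.induce (A i)) ∧
      InducedFree (SimpleGraph.pathGraph 4) (G.induce (Yset G A i)) :=
  ai_yi_p4free_general G hfree A hA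
end

section
/- With the standard setup, for each i (mod 5) there are no edges between Y_{i-1} and Y_{i+1}; that is, Y_{i-1} is anticomplete to Y_{i+1}. -/
open SimpleGraph

/-! If `x ∈ Y (i-1)` and `y ∈ Y (i+1)` were adjacent, pick a neighbour `a ∈ A (i-1)` of `y` and
neighbours `b ∈ A (i+1)`, `c ∈ A (i+2)` of `x`. Then `a - y - b - c` is an induced `P4` (as `y` misses
`A (i+2)`), and `x` is adjacent to all four of its vertices: a gem. -/

instance inst_s7 : DecidableRel gem.Adj := by
  unfold gem
  infer_instance

theorem gem_adj_or_exists_not_adj_iff :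
    ∀ u v : Fin 5, u ≠ v → gem.Adj u v ∨ ∃ w, ¬(gem.Adj u w ↔ gem.Adj v w) := by
  decide

namespace SimpleGraph

variable {V W : Type*} {G : SimpleGraph V}

theorem injective_of_adj_iff {H : SimpleGraph W} {f : W → V}
    (hf : ∀ u v, G.Adj (f u) (f v) ↔ H.Adj u v)
    (hH : ∀ u v, u ≠ v → H.Adj u v ∨ ∃ w, ¬(H.Adj u w ↔ H.Adj v w)) : f.Injective := by
  intro u v huv
  by_contra hne
  rcases hH u v hne with hadj | ⟨w, hw⟩
  · exact G.irrefl (huv ▸ (hf u v).2 hadj)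
  · exact hw (by rw [← hf, ← hf, huv])

theorem nonempty_gem_embedding {a y b c x : V}
    (hay : G.Adj a y) (hyb : G.Adj y b) (hbc : G.Adj b c)
    (hab : ¬G.Adj a b) (hac : ¬G.Adj a c) (hyc : ¬G.Adj y c)
    (hxa : G.Adj x a) (hxy : G.Adj x y) (hxb : G.Adj x b) (hxc : G.Adj x c) :
    Nonempty (gem ↪g G) := by
  have hf : ∀ u v, G.Adj (![a, y, b, c, x] u) (![a, y, b, c, x] v) ↔ gem.Adj u v := by
    intro u v
    fin_cases u <;> fin_cases v <;>
      simp +decide [G.adj_comm, *, hxa.symm, hxy.symm, hxb.symm, hxc.symm]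
  exact ⟨⟨⟨_, injective_of_adj_iff hf gem_adj_or_exists_not_adj_iff⟩, hf _ _⟩⟩

end SimpleGraph

namespace IsC5Partition

variable {V : Type*} {G : SimpleGraph V} {A : Fin 5 → Set V} {i j : Fin 5} {a b : V}

theorem adj_of_eq_add_one (hA : IsC5Partition G A) (hj : j = i + 1) (ha : a ∈ A i)
    (hb : b ∈ A j) : G.Adj a b :=
  hA.complete_succ i a ha b (hj ▸ hb)

theorem not_adj_of_eq_add_two (hA : IsC5Partition G A) (hj : j = i + 2) (ha : a ∈ A i)
    (hb : b ∈ A j) : ¬G.Adj a b :=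
  hA.anticomplete_succ i a ha b (hj ▸ hb)

theorem not_adj_of_eq_sub_two (hA : IsC5Partition G A) (hj : j = i - 2) (ha : a ∈ A i)
    (hb : b ∈ A j) : ¬G.Adj a b :=
  hA.anticomplete_pred i a ha b (hj ▸ hb)

end IsC5Partition

theorem yset_anticomplete_general {V : Type*} (G : SimpleGraph V)
    (hfree : P5GemFree G)
    (A : Fin 5 → Set V) (hA : IsC5Partition G A) :
    ∀ i : Fin 5, AnticompleteTo G (Yset G A (i - 1)) (Yset G A (i + 1)) := by
  intro i x hx y hy hxy
  obtain ⟨-, hxA, -, -, ⟨c, hc, hxc⟩, ⟨b, hb, hxb⟩, -⟩ := hx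
  obtain ⟨-, hyB, -, hyC, ⟨a, ha, hya⟩, -, -⟩ := hy
  rw [show i - 1 - 2 = i + 2 by grind] at hc
  rw [show i - 1 + 2 = i + 1 by grind] at hb
  rw [show i + 1 - 2 = i - 1 by grind] at ha
  rw [show i + 1 + 1 = i + 2 by grind] at hyC
  have hbc : G.Adj b c := hA.adj_of_eq_add_one (by grind) hb hc
  have hab : ¬G.Adj a b := hA.not_adj_of_eq_add_two (by grind) ha hb
  have hac : ¬G.Adj a c := hA.not_adj_of_eq_sub_two (by grind) ha hc
  exact hfree.2 (nonempty_gem_embedding hya.symm (hyB b hb) hbc hab hac (hyC c hc)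
    (hxA a ha) hxy hxb hxc)

/-- Claim 2.3: for each `i`, `Y (i-1)` is anticomplete to `Y (i+1)`. -/
theorem yset_anticomplete {V : Type*} [Fintype V] (G : SimpleGraph V)
    (hconn : G.Connected) (hfree : P5GemFree G)
    (hC5 : Nonempty (SimpleGraph.cycleGraph 5 ↪g G))
    (A : Fin 5 → Set V) (hA : IsC5Partition G A)
    (hmax : ∀ B : Fin 5 → Set V, IsC5Partition G B → ¬ (⋃ i, A i) ⊂ (⋃ i, B i)) :
    ∀ i : Fin 5, AnticompleteTo G (Yset G A (i - 1)) (Yset G A (i + 1)) :=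
  yset_anticomplete_general G hfree A hA
end

section
/- With the standard setup, if for some i the set Y_i contains a pure vertex (a vertex complete to A_{i-2} ∪ A_{i+2}), then every vertex of Y_i is pure. -/
open SimpleGraph

/-!
Let `p ∈ Y_i` be pure and let `y ∈ Y_i` be complete to `A_{i+2}`, with a neighbour `b` and,
for a contradiction, a non-neighbour `a` in `A_{i-2}`. Pick `c ∈ A_{i+2}`, `w ∈ A_i` and
`u ∈ A_{i-1}`. If `p ~ y`, then `a-c-y-w` is an induced `P4` dominated by `p`; otherwise, if
`a ~ b`, then `u-a-c-y` is one dominated by `b`; otherwise `a-p-b-y` is one dominated by `c`.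
Each is a gem. Exchanging the roles of `i ± 1` and of `i ± 2` handles a `y` complete to
`A_{i-2}`.
-/

theorem InducedFree.false_of_gem {V : Type*} {G : SimpleGraph V} (hg : InducedFree gem G)
    {v₀ v₁ v₂ v₃ v₄ : V} (h₀₂ : v₀ ≠ v₂) (h₀₃ : v₀ ≠ v₃) (h₁₃ : v₁ ≠ v₃)
    (a₀₁ : G.Adj v₀ v₁) (a₁₂ : G.Adj v₁ v₂) (a₂₃ : G.Adj v₂ v₃)
    (a₄₀ : G.Adj v₄ v₀) (a₄₁ : G.Adj v₄ v₁) (a₄₂ : G.Adj v₄ v₂) (a₄₃ : G.Adj v₄ v₃)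
    (n₀₂ : ¬ G.Adj v₀ v₂) (n₀₃ : ¬ G.Adj v₀ v₃) (n₁₃ : ¬ G.Adj v₁ v₃) : False := by
  refine hg ⟨⟨⟨![v₀, v₁, v₂, v₃, v₄], ?_⟩, ?_⟩⟩
  · intro x y hxy
    fin_cases x <;> fin_cases y <;>
      simp_all [a₀₁.ne, a₁₂.ne, a₂₃.ne, a₄₀.ne, a₄₁.ne, a₄₂.ne, a₄₃.ne, eq_comm]
  · intro x y
    change G.Adj (![v₀, v₁, v₂, v₃, v₄] x) (![v₀, v₁, v₂, v₃, v₄] y) ↔ gem.Adj x y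
    fin_cases x <;> fin_cases y <;>
      simp [gem, G.adj_comm, a₄₀.symm, a₄₁.symm, a₄₂.symm, a₄₃.symm, *]

theorem InducedFree.forall_adj_of_exists_adj {V : Type*} {G : SimpleGraph V}
    (hg : InducedFree gem G) {W X Z U : Set V}
    (hXZ : CompleteTo G X Z) (hWX : AnticompleteTo G W X) (hWZ : AnticompleteTo G W Z)
    (hUX : CompleteTo G U X) (hUZ : AnticompleteTo G U Z)
    (hW : W.Nonempty) (hZ : Z.Nonempty) (hU : U.Nonempty) {p y : V}
    (hpW : ∀ w ∈ W, G.Adj p w) (hpX : ∀ x ∈ X, G.Adj p x) (hpZ : ∀ z ∈ Z, G.Adj p z)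
    (hyW : ∀ w ∈ W, G.Adj y w) (hyZ : ∀ z ∈ Z, G.Adj y z) (hyU : ∀ u ∈ U, ¬ G.Adj y u)
    (hyX : ∃ x ∈ X, G.Adj y x) :
    ∀ x ∈ X, G.Adj y x := by
  by_contra! ⟨a, ha, hya⟩
  obtain ⟨b, hb, hyb⟩ := hyX
  obtain ⟨w, hw⟩ := hW
  obtain ⟨c, hc⟩ := hZ
  obtain ⟨u, hu⟩ := hU
  have hac := hXZ a ha c hc
  have hbc := hXZ b hb c hc
  have hwa := hWX w hw a ha
  have hwc := hWZ w hw c hc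
  have hua := hUX u hu a ha
  have hub := hUX u hu b hb
  have huc := hUZ u hu c hc
  have hyw := hyW w hw
  have hyc := hyZ c hc
  have hyu := hyU u hu
  have hay : a ≠ y := G.ne_of_adj_of_not_adj hua.symm hyu
  by_cases hpy : G.Adj p y
  · exact hg.false_of_gem hay (G.ne_of_adj_of_not_adj hac hwc) (G.ne_of_adj_of_not_adj hac.symm hwa)
      hac hyc.symm hyw (hpX a ha) (hpZ c hc) hpy (hpW w hw) (hya ·.symm) (hwa ·.symm) (hwc ·.symm)
  by_cases hab : G.Adj a b
  · exact hg.false_of_gem (G.ne_of_adj_of_not_adj hyc.symm (hyu ·.symm)).symm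
      (G.ne_of_adj_of_not_adj hua hya) hay
      hua hac hyc.symm hub.symm hab.symm hbc hyb.symm huc (hyu ·.symm) (hya ·.symm)
  · exact hg.false_of_gem (G.ne_of_adj_of_not_adj hyb.symm (hya ·.symm)).symm hay
      (G.ne_of_adj_of_not_adj (hpX a ha) hya)
      (hpX a ha).symm (hpX b hb) hyb.symm hac.symm (hpZ c hc).symm hbc.symm hyc.symm
      hab (hya ·.symm) hpy

theorem IsC5Partition.completeTo {V : Type*} {G : SimpleGraph V} {A : Fin 5 → Set V}
    (hA : IsC5Partition G A) {j k : Fin 5} (h : k = j + 1 ∨ k = j - 1) :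
    CompleteTo G (A j) (A k) := by
  rcases h with rfl | rfl
  exacts [hA.complete_succ j, hA.complete_pred j]

theorem IsC5Partition.anticompleteTo {V : Type*} {G : SimpleGraph V} {A : Fin 5 → Set V}
    (hA : IsC5Partition G A) {j k : Fin 5} (h : k = j + 2 ∨ k = j - 2) :
    AnticompleteTo G (A j) (A k) := by
  rcases h with rfl | rfl
  exacts [hA.anticomplete_succ j, hA.anticomplete_pred j]

theorem exists_pure_all_pure_general {V : Type*} (G : SimpleGraph V)
    (hfree : P5GemFree G)
    (A : Fin 5 → Set V) (hA : IsC5Partition G A) :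
    ∀ i : Fin 5, (∃ p ∈ Yset G A i, IsPureVertex G A i p) → ∀ y ∈ Yset G A i, IsPureVertex G A i y := by
  rintro i ⟨p, ⟨-, hpi, -⟩, hp_sub, hp_add⟩ y ⟨-, hyi, hy_pred, hy_succ, hy_sub, hy_add, hy⟩
  rcases hy with hy_sub_all | hy_add_all
  · refine ⟨hy_sub_all, hfree.2.forall_adj_of_exists_adj (U := A (i + 1))
      (hA.completeTo (by grind)) (hA.anticompleteTo (by grind)) (hA.anticompleteTo (by grind))
      (hA.completeTo (by grind)) (hA.anticompleteTo (by grind)) (hA.nonempty i) (hA.nonempty _)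
      (hA.nonempty _) hpi hp_add hp_sub hyi hy_sub_all hy_succ hy_add⟩
  · refine ⟨hfree.2.forall_adj_of_exists_adj (U := A (i - 1))
      (hA.completeTo (by grind)) (hA.anticompleteTo (by grind)) (hA.anticompleteTo (by grind))
      (hA.completeTo (by grind)) (hA.anticompleteTo (by grind)) (hA.nonempty i) (hA.nonempty _)
      (hA.nonempty _) hpi hp_sub hp_add hyi hy_add_all hy_pred hy_sub, hy_add_all⟩

/-- Claim 2.4: if some vertex of `Y i` is pure then every vertex of `Y i` is pure. -/
theorem exists_pure_all_pure {V : Type*} [Fintype V] (G : SimpleGraph V)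
    (hconn : G.Connected) (hfree : P5GemFree G)
    (hC5 : Nonempty (SimpleGraph.cycleGraph 5 ↪g G))
    (A : Fin 5 → Set V) (hA : IsC5Partition G A)
    (hmax : ∀ B : Fin 5 → Set V, IsC5Partition G B → ¬ (⋃ i, A i) ⊂ (⋃ i, B i)) :
    ∀ i : Fin 5, (∃ p ∈ Yset G A i, IsPureVertex G A i p) → ∀ y ∈ Yset G A i, IsPureVertex G A i y :=
  exists_pure_all_pure_general G hfree A hA
end

section
/- With the standard setup, for each i (mod 5): either Y_i is complete to A_{i+2}, or Y_i is complete to A_{i-2}. -/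
open SimpleGraph

/-!
Suppose `y₁ ∈ Y_i` misses `u ∈ A_{i+2}` and `y₂ ∈ Y_i` misses `v ∈ A_{i-2}`; then `y₁` is
complete to `A_{i-2}` and `y₂` to `A_{i+2}`. Since `A_{i-2}` is complete to `A_{i+2}`, three gems
appear. If `y₁ ~ y₂`: `p - y₁ - v' - u` with apex `y₂`, for `p ∈ A_i` and a neighbour `v'` of `y₂`
in `A_{i-2}`. If `u` is adjacent to a neighbour `u'` of `y₁` in `A_{i+2}`: `q - u - v - y₁` with
apex `u'`, for `q ∈ A_{i+1}`. Otherwise: `y₁ - u' - y₂ - u` with apex `v'`.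
-/

theorem nonempty_gem_embedding {V : Type*} {G : SimpleGraph V} {a b c d e : V}
    (hab : G.Adj a b) (hbc : G.Adj b c) (hcd : G.Adj c d)
    (hea : G.Adj e a) (heb : G.Adj e b) (hec : G.Adj e c) (hed : G.Adj e d)
    (hac : ¬ G.Adj a c) (had : ¬ G.Adj a d) (hbd : ¬ G.Adj b d) :
    Nonempty (gem ↪g G) := by
  have hac' : a ≠ c := by rintro rfl; exact had hcd
  have had' : a ≠ d := by rintro rfl; exact hbd hab.symm
  have hbd' : b ≠ d := by rintro rfl; exact had hab
  refine ⟨⟨⟨![a, b, c, d, e], ?_⟩, ?_⟩⟩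
  · intro i j h
    fin_cases i <;> fin_cases j <;> simp_all
  · intro i j
    change G.Adj (![a, b, c, d, e] i) (![a, b, c, d, e] j) ↔ gem.Adj i j
    fin_cases i <;> fin_cases j <;>
      simp [gem, *, hab.symm, hbc.symm, hcd.symm, hea.symm, heb.symm, hec.symm, hed.symm,
        mt G.adj_symm hac, mt G.adj_symm had, mt G.adj_symm hbd]

section

variable {V : Type*} {G : SimpleGraph V} {A : Fin 5 → Set V} {i : Fin 5}

theorem IsC5Partition.adj_of_mem_sub_two_of_mem_add_two (hA : IsC5Partition G A) {x y : V}
    (hx : x ∈ A (i - 2)) (hy : y ∈ A (i + 2)) : G.Adj x y :=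
  hA.complete_pred (i - 2) x hx y (by rwa [show i - 2 - 1 = i + 2 by omega])

namespace Yset

theorem adj_of_not_adj_add_two {y u : V} (hy : y ∈ Yset G A i) (hu : u ∈ A (i + 2))
    (hyu : ¬ G.Adj y u) {v : V} (hv : v ∈ A (i - 2)) : G.Adj y v :=
  hy.2.2.2.2.2.2.resolve_right (fun h ↦ hyu (h u hu)) v hv

theorem adj_of_not_adj_sub_two {y v : V} (hy : y ∈ Yset G A i) (hv : v ∈ A (i - 2))
    (hyv : ¬ G.Adj y v) {u : V} (hu : u ∈ A (i + 2)) : G.Adj y u :=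
  hy.2.2.2.2.2.2.resolve_left (fun h ↦ hyv (h v hv)) u hu

theorem not_adj_of_not_adj_of_adj (hA : IsC5Partition G A) (hgem : InducedFree gem G)
    {y u u' : V} (hy : y ∈ Yset G A i) (hu : u ∈ A (i + 2)) (hu' : u' ∈ A (i + 2))
    (hyu : ¬ G.Adj y u) (hyu' : G.Adj y u') : ¬ G.Adj u u' := by
  intro huu'
  obtain ⟨v, hv⟩ := hA.nonempty (i - 2)
  obtain ⟨q, hq⟩ := hA.nonempty (i + 1)
  have hq_complete {x : V} (hx : x ∈ A (i + 2)) : G.Adj q x :=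
    hA.complete_succ (i + 1) q hq x (by rwa [show i + 1 + 1 = i + 2 by omega])
  have hqv : ¬ G.Adj q v :=
    hA.anticomplete_succ (i + 1) q hq v (by rwa [show i + 1 + 2 = i - 2 by omega])
  have hqy : ¬ G.Adj q y := fun h ↦ hy.2.2.2.1 q hq h.symm
  exact hgem <| nonempty_gem_embedding (hq_complete hu)
    (hA.adj_of_mem_sub_two_of_mem_add_two hv hu).symm (adj_of_not_adj_add_two hy hu hyu hv).symm
    (hq_complete hu').symm huu'.symm (hA.adj_of_mem_sub_two_of_mem_add_two hv hu').symm
    hyu'.symm hqv hqy (fun h ↦ hyu h.symm)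

theorem not_adj_of_not_adj_add_two_of_not_adj_sub_two (hA : IsC5Partition G A)
    (hgem : InducedFree gem G) {y₁ y₂ u v : V} (hy₁ : y₁ ∈ Yset G A i) (hy₂ : y₂ ∈ Yset G A i)
    (hu : u ∈ A (i + 2)) (hy₁u : ¬ G.Adj y₁ u) (hv : v ∈ A (i - 2)) (hy₂v : ¬ G.Adj y₂ v) :
    ¬ G.Adj y₁ y₂ := by
  intro hy₁y₂
  obtain ⟨p, hp⟩ := hA.nonempty i
  obtain ⟨v', hv', hy₂v'⟩ := hy₂.2.2.2.2.1
  exact hgem <| nonempty_gem_embedding (hy₁.2.1 p hp).symm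
    (adj_of_not_adj_add_two hy₁ hu hy₁u hv') (hA.adj_of_mem_sub_two_of_mem_add_two hv' hu)
    (hy₂.2.1 p hp) hy₁y₂.symm hy₂v' (adj_of_not_adj_sub_two hy₂ hv hy₂v hu)
    (hA.anticomplete_pred i p hp v' hv') (hA.anticomplete_succ i p hp u hu) hy₁u

end Yset

end

theorem yset_complete_one_side_general {V : Type*} (G : SimpleGraph V)
    (hfree : P5GemFree G)
    (A : Fin 5 → Set V) (hA : IsC5Partition G A) :
    ∀ i : Fin 5, CompleteTo G (Yset G A i) (A (i + 2)) ∨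
      CompleteTo G (Yset G A i) (A (i - 2)) := by
  intro i
  by_contra h
  simp only [CompleteTo, not_or, not_forall] at h
  obtain ⟨⟨y₁, hy₁, u, hu, hy₁u⟩, ⟨y₂, hy₂, v, hv, hy₂v⟩⟩ := h
  obtain ⟨u', hu', hy₁u'⟩ := hy₁.2.2.2.2.2.1
  obtain ⟨v', hv', hy₂v'⟩ := hy₂.2.2.2.2.1
  have hgem := hfree.2
  have hy₁y₂ := Yset.not_adj_of_not_adj_add_two_of_not_adj_sub_two hA hgem hy₁ hy₂ hu hy₁u hv hy₂v
  have huu' := Yset.not_adj_of_not_adj_of_adj hA hgem hy₁ hu hu' hy₁u hy₁u'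
  have hy₂_complete {x : V} (hx : x ∈ A (i + 2)) : G.Adj y₂ x :=
    Yset.adj_of_not_adj_sub_two hy₂ hv hy₂v hx
  have hv'_complete {x : V} (hx : x ∈ A (i + 2)) : G.Adj v' x :=
    hA.adj_of_mem_sub_two_of_mem_add_two hv' hx
  exact hgem <| nonempty_gem_embedding hy₁u' (hy₂_complete hu').symm (hy₂_complete hu)
    (Yset.adj_of_not_adj_add_two hy₁ hu hy₁u hv').symm (hv'_complete hu') hy₂v'.symm
    (hv'_complete hu) hy₁y₂ hy₁u (fun h ↦ huu' h.symm)

/-- Claim 2.5: for each `i`, either `Y i` is complete to `A (i+2)` or `Y i` is complete to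
`A (i-2)`. -/
theorem yset_complete_one_side {V : Type*} [Fintype V] (G : SimpleGraph V)
    (hconn : G.Connected) (hfree : P5GemFree G)
    (hC5 : Nonempty (SimpleGraph.cycleGraph 5 ↪g G))
    (A : Fin 5 → Set V) (hA : IsC5Partition G A)
    (hmax : ∀ B : Fin 5 → Set V, IsC5Partition G B → ¬ (⋃ i, A i) ⊂ (⋃ i, B i)) :
    ∀ i : Fin 5, CompleteTo G (Yset G A i) (A (i + 2)) ∨
      CompleteTo G (Yset G A i) (A (i - 2)) :=
  yset_complete_one_side_general G hfree A hA
end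

section
/- With the standard setup, the vertex set of each connected component of the subgraph of G induced by R is a homogeneous set of G, and hence each component of G[R] is P4-free. -/
open SimpleGraph

/-!
Let `C` be a component of `G[R]` and `v ∉ C` a vertex with a neighbour and a non-neighbour in
`C`. Along a path in `C` we find adjacent `p, q ∈ C` with `v ~ p` and `v ≁ q`. Then `v ∉ A ∪ R`,
so `v` has a neighbour in `A`; for every edge `ab` of `G[A]` with `v ~ a` we get `v ~ b`, since
otherwise `q-p-v-a-b` is an induced `P5`. As `G[A]` is connected, `v` is complete to `A`, and
`v` together with an induced `P4` of the `C5`-structure is a gem. Hence `C` is homogeneous, and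
since `G` is connected and `A` is nonempty some vertex outside `C` is complete to `C`, so an
induced `P4` in `C` would again give a gem.
-/

namespace SimpleGraph

variable {V W : Type*} {G : SimpleGraph V}

def Embedding.ofAdjIff {H : SimpleGraph W} (hH : ∀ i j, i ≠ j → ∃ k, ¬ (H.Adj i k ↔ H.Adj j k))
    (f : W → V) (hf : ∀ i j, G.Adj (f i) (f j) ↔ H.Adj i j) : H ↪g G where
  toFun := f
  inj' i j hij := by
    by_contra hne
    obtain ⟨k, hk⟩ := hH i j hne
    exact hk (by rw [← hf, ← hf, hij])
  map_rel_iff' := hf _ _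

theorem Reachable.exists_boundary_adj {x y : V} (h : G.Reachable x y) {S : Set V} (hx : x ∈ S)
    (hy : y ∉ S) : ∃ u w, G.Reachable x u ∧ G.Adj u w ∧ u ∈ S ∧ w ∉ S := by
  classical
  obtain ⟨p⟩ := h
  obtain ⟨d, hd, hdS, hdS'⟩ := p.exists_boundary_dart S hx hy
  exact ⟨d.fst, d.snd, ⟨p.takeUntil d.fst (p.dart_fst_mem_support_of_mem_darts hd)⟩, d.adj,
    hdS, hdS'⟩

theorem ConnectedComponent.exists_boundary_adj (C : G.ConnectedComponent) {S : Set V} {x y : V}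
    (hx : x ∈ C.supp) (hy : y ∈ C.supp) (hxS : x ∈ S) (hyS : y ∉ S) :
    ∃ u w, u ∈ C.supp ∧ w ∈ C.supp ∧ G.Adj u w ∧ u ∈ S ∧ w ∉ S := by
  obtain ⟨u, w, hxu, huw, huS, hwS⟩ := (C.reachable_of_mem_supp hx hy).exists_boundary_adj hxS hyS
  have hu : u ∈ C.supp := by
    rw [ConnectedComponent.mem_supp_iff] at hx ⊢
    rw [← hx, ConnectedComponent.eq]
    exact hxu.symm
  exact ⟨u, w, hu, C.mem_supp_of_adj_mem_supp hu huw, huw, huS, hwS⟩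

end SimpleGraph

section

variable {V : Type*} {G : SimpleGraph V}

theorem InducedFree.false_of_pathGraph_five (hfree : InducedFree (pathGraph 5) G)
    {u₀ u₁ u₂ u₃ u₄ : V} (h₀₁ : G.Adj u₀ u₁) (h₁₂ : G.Adj u₁ u₂) (h₂₃ : G.Adj u₂ u₃)
    (h₃₄ : G.Adj u₃ u₄) (h₀₂ : ¬ G.Adj u₀ u₂) (h₀₃ : ¬ G.Adj u₀ u₃) (h₀₄ : ¬ G.Adj u₀ u₄)
    (h₁₃ : ¬ G.Adj u₁ u₃) (h₁₄ : ¬ G.Adj u₁ u₄) (h₂₄ : ¬ G.Adj u₂ u₄) : False :=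
  hfree ⟨.ofAdjIff (by simp only [pathGraph_adj]; decide) ![u₀, u₁, u₂, u₃, u₄] fun i j => by
    fin_cases i <;> fin_cases j <;> simp [pathGraph_adj, G.adj_comm, *]⟩

theorem InducedFree.false_of_gem_s13 (hfree : InducedFree gem G) {u₀ u₁ u₂ u₃ v : V}
    (h₀₁ : G.Adj u₀ u₁) (h₁₂ : G.Adj u₁ u₂) (h₂₃ : G.Adj u₂ u₃) (h₀₂ : ¬ G.Adj u₀ u₂)
    (h₀₃ : ¬ G.Adj u₀ u₃) (h₁₃ : ¬ G.Adj u₁ u₃) (hv₀ : G.Adj v u₀) (hv₁ : G.Adj v u₁)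
    (hv₂ : G.Adj v u₂) (hv₃ : G.Adj v u₃) : False :=
  hfree ⟨.ofAdjIff
    (by simp only [gem, fromEdgeSet_adj, Set.mem_insert_iff, Set.mem_singleton_iff]; decide)
    ![u₀, u₁, u₂, u₃, v] fun i j => by
      fin_cases i <;> fin_cases j <;>
        simp [gem, fromEdgeSet_adj, G.adj_comm, hv₀.symm, hv₁.symm, hv₂.symm, hv₃.symm, *]⟩

theorem IsHomogeneousSet.inducedFree_pathGraph_four (hgem : InducedFree gem G) {X : Set V}
    (hX : IsHomogeneousSet G X) {v x : V} (hv : v ∉ X) (hx : x ∈ X) (hvx : G.Adj v x) :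
    InducedFree (pathGraph 4) (G.induce X) := by
  rintro ⟨e⟩
  have hadj (i j : Fin 4) : G.Adj (e i) (e j) ↔ (pathGraph 4).Adj i j := e.map_adj_iff
  have hve (k : Fin 4) : G.Adj v (e k) := hX v hv ⟨x, hx, hvx⟩ _ (e k).2
  exact hgem.false_of_gem_s13 ((hadj 0 1).2 (by simp [pathGraph_adj]))
    ((hadj 1 2).2 (by simp [pathGraph_adj])) ((hadj 2 3).2 (by simp [pathGraph_adj]))
    (mt (hadj 0 2).1 (by simp [pathGraph_adj])) (mt (hadj 0 3).1 (by simp [pathGraph_adj]))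
    (mt (hadj 1 3).1 (by simp [pathGraph_adj])) (hve 0) (hve 1) (hve 2) (hve 3)

namespace IsC5Partition

variable {A : Fin 5 → Set V} (hA : IsC5Partition G A)
include hA

open Fin.NatCast in
theorem forall_of_adj_closed (P : V → Prop) {a : V} (ha : a ∈ ⋃ i, A i) (hPa : P a)
    (hP : ∀ b ∈ ⋃ i, A i, ∀ c ∈ ⋃ i, A i, G.Adj b c → P b → P c) : ∀ b ∈ ⋃ i, A i, P b := by
  obtain ⟨i, hai⟩ := Set.mem_iUnion.1 ha
  have hstep (j : Fin 5) (c : V) (hc : c ∈ A j) (hPc : P c) : ∀ b ∈ A (j + 1), P b :=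
    fun b hb => hP c (Set.mem_iUnion.2 ⟨j, hc⟩) b (Set.mem_iUnion.2 ⟨j + 1, hb⟩)
      (hA.complete_succ j c hc b hb) hPc
  have hnext (n : ℕ) : ∀ b ∈ A (i + 1 + (n : Fin 5)), P b := by
    induction n with
    | zero => simpa using hstep i a hai hPa
    | succ n ih =>
      obtain ⟨c, hc⟩ := hA.nonempty (i + 1 + (n : Fin 5))
      simpa [add_assoc] using hstep _ c hc (ih c hc)
  intro b hb
  obtain ⟨j, hbj⟩ := Set.mem_iUnion.1 hb
  exact hnext (j - (i + 1)).val b (by simpa using hbj)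

theorem not_forall_adj (hgem : InducedFree gem G) (v : V) : ¬ ∀ a ∈ ⋃ i, A i, G.Adj v a := by
  intro hv
  obtain ⟨a₀, h₀⟩ := hA.nonempty 0
  obtain ⟨a₁, h₁⟩ := hA.nonempty 1
  obtain ⟨a₂, h₂⟩ := hA.nonempty 2
  obtain ⟨a₃, h₃⟩ := hA.nonempty 3
  have hv' (k : Fin 5) {a : V} (ha : a ∈ A k) : G.Adj v a := hv a (Set.mem_iUnion.2 ⟨k, ha⟩)
  exact hgem.false_of_gem_s13 (hA.complete_succ 0 a₀ h₀ a₁ h₁) (hA.complete_succ 1 a₁ h₁ a₂ h₂)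
    (hA.complete_succ 2 a₂ h₂ a₃ h₃) (hA.anticomplete_succ 0 a₀ h₀ a₂ h₂)
    (hA.anticomplete_pred 0 a₀ h₀ a₃ h₃) (hA.anticomplete_succ 1 a₁ h₁ a₃ h₃)
    (hv' 0 h₀) (hv' 1 h₁) (hv' 2 h₂) (hv' 3 h₃)

theorem isHomogeneousSet_rset_component (hP5 : InducedFree (pathGraph 5) G)
    (hgem : InducedFree gem G) (C : (G.induce (Rset G A)).ConnectedComponent) :
    IsHomogeneousSet G (Subtype.val '' C.supp) := by
  rintro v hvC ⟨_, ⟨x, hx, rfl⟩, hvx⟩ _ ⟨y, hy, rfl⟩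
  by_contra hvy
  obtain ⟨p, q, hp, -, hpq, hvp, hvq⟩ :=
    C.exists_boundary_adj (S := {z | G.Adj v z}) hx hy hvx hvy
  have hvA : v ∉ ⋃ i, A i := fun h => p.2.2 v h hvp.symm
  have hvR : v ∉ Rset G A := fun hvR =>
    hvC ⟨⟨v, hvR⟩, C.mem_supp_of_adj_mem_supp hp (G.adj_symm hvp : G.Adj p v), rfl⟩
  obtain ⟨a, ha, hva⟩ : ∃ a ∈ ⋃ i, A i, G.Adj v a := by
    by_contra! h
    exact hvR ⟨hvA, h⟩
  -- otherwise `q-p-v-a-b` is an induced `P5`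
  have hclosed : ∀ a ∈ ⋃ i, A i, ∀ b ∈ ⋃ i, A i, G.Adj a b → G.Adj v a → G.Adj v b := by
    intro a ha b hb hab hva
    by_contra hvb
    exact hP5.false_of_pathGraph_five (G.adj_symm hpq) (G.adj_symm hvp) hva hab
      (fun h => hvq h.symm) (q.2.2 a ha) (q.2.2 b hb) (p.2.2 a ha) (p.2.2 b hb) hvb
  exact hA.not_forall_adj hgem v (hA.forall_of_adj_closed _ ha hva hclosed)

end IsC5Partition

end

theorem components_of_R_homogeneous_general {V : Type*} (G : SimpleGraph V)
    (hconn : G.Connected) (hfree : P5GemFree G)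
    (A : Fin 5 → Set V) (hA : IsC5Partition G A) :
    ∀ C : (G.induce (Rset G A)).ConnectedComponent,
      IsHomogeneousSet G (Subtype.val '' C.supp) ∧
        InducedFree (SimpleGraph.pathGraph 4) (G.induce (Subtype.val '' C.supp)) := by
  intro C
  have hhom := hA.isHomogeneousSet_rset_component hfree.1 hfree.2 C
  refine ⟨hhom, ?_⟩
  obtain ⟨x, hx⟩ := C.nonempty_supp
  obtain ⟨a, ha⟩ := hA.nonempty 0
  have haC : a ∉ Subtype.val '' C.supp := fun ⟨u, _, hu⟩ => u.2.1 (hu ▸ Set.mem_iUnion.2 ⟨0, ha⟩)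
  obtain ⟨u, w, -, huw, hu, hw⟩ :=
    (hconn.preconnected x a).exists_boundary_adj (Set.mem_image_of_mem _ hx) haC
  exact hhom.inducedFree_pathGraph_four hfree.2 hw hu huw.symm

/-- Claim 2.8: the vertex set of each connected component of `G[R]` is a homogeneous set of
`G`, and hence each such component is P4-free. -/
theorem components_of_R_homogeneous {V : Type*} [Fintype V] (G : SimpleGraph V)
    (hconn : G.Connected) (hfree : P5GemFree G)
    (hC5 : Nonempty (SimpleGraph.cycleGraph 5 ↪g G))
    (A : Fin 5 → Set V) (hA : IsC5Partition G A)
    (hmax : ∀ B : Fin 5 → Set V, IsC5Partition G B → ¬ (⋃ i, A i) ⊂ (⋃ i, B i)) :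
    ∀ C : (G.induce (Rset G A)).ConnectedComponent,
      IsHomogeneousSet G (Subtype.val '' C.supp) ∧
        InducedFree (SimpleGraph.pathGraph 4) (G.induce (Subtype.val '' C.supp)) :=
  components_of_R_homogeneous_general G hconn hfree A hA
end

section
/- For every graph G in the class H there is a graph G* in the class H* such that ω(G) = ω(G*) and χ(G) = χ(G*). Moreover, G has a good stable set if and only if G* has a good stable set. -/
open SimpleGraph

/-- A partition witnessing membership in the class `H` (here `A 0, …, A 6` play the roles of
`A_1, …, A_7`). -/
structure IsHPartition {V : Type*} (G : SimpleGraph V) (A : Fin 7 → Set V) : Prop where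
  nonempty : ∀ i, (A i).Nonempty
  covers : (⋃ i, A i) = Set.univ
  disjoint : ∀ i j, i ≠ j → Disjoint (A i) (A j)
  p4free : ∀ i, InducedFree (SimpleGraph.pathGraph 4) (G.induce (A i))
  c12 : CompleteTo G (A 0) (A 1)
  c15 : CompleteTo G (A 0) (A 4)
  c16 : CompleteTo G (A 0) (A 5)
  a13 : AnticompleteTo G (A 0) (A 2)
  a14 : AnticompleteTo G (A 0) (A 3)
  a17 : AnticompleteTo G (A 0) (A 6)
  c32 : CompleteTo G (A 2) (A 1)
  c34 : CompleteTo G (A 2) (A 3)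
  c36 : CompleteTo G (A 2) (A 5)
  a35 : AnticompleteTo G (A 2) (A 4)
  a37 : AnticompleteTo G (A 2) (A 6)
  c45 : CompleteTo G (A 3) (A 4)
  c46 : CompleteTo G (A 3) (A 5)
  a42 : AnticompleteTo G (A 3) (A 1)
  a47 : AnticompleteTo G (A 3) (A 6)
  a25 : AnticompleteTo G (A 1) (A 4)
  a26 : AnticompleteTo G (A 1) (A 5)
  a27 : AnticompleteTo G (A 1) (A 6)
  a56 : AnticompleteTo G (A 4) (A 5)
  a57 : AnticompleteTo G (A 4) (A 6)
  hom : ∀ C : (G.induce (A 6)).ConnectedComponent,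
    IsHomogeneousSet G (Subtype.val '' C.supp)

/-- The class `H` of connected (P5, gem)-free graphs admitting the seven-set partition. -/
def InClassH {V : Type*} (G : SimpleGraph V) : Prop :=
  G.Connected ∧ P5GemFree G ∧ ∃ A : Fin 7 → Set V, IsHPartition G A

/-- A partition witnessing membership in the class `H*`: an `H`-partition in which
`A 0, …, A 4` (the sets `A_1, …, A_5`) and the vertex set of each connected component of the
subgraph induced by `A 6` (the set `A_7`) are cliques. -/
def IsHStarPartition {V : Type*} (G : SimpleGraph V) (A : Fin 7 → Set V) : Prop :=
  IsHPartition G A ∧ (∀ i : Fin 7, i.val < 5 → G.IsClique (A i)) ∧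
    ∀ C : (G.induce (A 6)).ConnectedComponent, G.IsClique (Subtype.val '' C.supp)

/-- The class `H*`. -/
def InClassHStar {V : Type*} (G : SimpleGraph V) : Prop :=
  G.Connected ∧ P5GemFree G ∧ ∃ A : Fin 7 → Set V, IsHStarPartition G A

/-- A stable set: a set of pairwise non-adjacent vertices. -/
def IsStableSet {V : Type*} (G : SimpleGraph V) (S : Set V) : Prop :=
  S.Pairwise (fun u v => ¬ G.Adj u v)

/-- A good stable set: a stable set meeting every clique of size `ω(G)`. -/
def HasGoodStableSet {V : Type*} [Fintype V] (G : SimpleGraph V) : Prop :=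
  ∃ S : Set V, IsStableSet G S ∧
    ∀ K : Finset V, G.IsNClique G.cliqueNum K → ∃ v ∈ S, v ∈ K

/-!
The sets `A 0, …, A 4`, the singletons of `A 5` and the components of `G[A 6]` partition `G`
into homogeneous sets, each inducing a `P4`-free graph. By Seinsche's theorem a `P4`-free graph is
a join or a disjoint union of smaller ones, so it can be coloured with `ω` colours; sending each
vertex of a part to the vertex of the same colour in a fixed maximum clique of the part retracts
the part onto that clique. Gluing these retractions gives a homomorphism from `G` onto the
subgraph `G*` induced on the union of the chosen cliques, and `G*` lies in `H*`. Homomorphisms in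
both directions give `ω(G) = ω(G*)` and `χ(G) = χ(G*)`. The preimage of a good stable set of `G*`
is good in `G`; conversely, choosing one vertex of `G*` in each part met by a good stable set of
`G` works because a maximum clique meeting a homogeneous clique contains all of it.
-/

namespace SimpleGraph

variable {V V' W : Type*} {G : SimpleGraph V} {H : SimpleGraph W}

lemma IsNClique.image_hom [DecidableEq W] (f : G →g H) {n : ℕ} {K : Finset V}
    (hK : G.IsNClique n K) : H.IsNClique n (K.image f) := by
  have hinj : Set.InjOn f K := fun x hx y hy hxy => by
    by_contra hne
    exact (f.map_adj (hK.isClique hx hy hne)).ne hxy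
  refine ⟨?_, by rw [Finset.card_image_of_injOn hinj, hK.card_eq]⟩
  rw [Finset.coe_image]
  rintro _ ⟨x, hx, rfl⟩ _ ⟨y, hy, rfl⟩ hne
  exact f.map_adj (hK.isClique hx hy fun h => hne (congrArg f h))

lemma cliqueNum_le_of_hom [Finite V] [Finite W] (f : G →g H) : G.cliqueNum ≤ H.cliqueNum := by
  classical
  obtain ⟨K, hK⟩ := G.exists_isNClique_cliqueNum
  have := hK.image_hom f
  exact this.card_eq ▸ this.isClique.card_le_cliqueNum

def Embedding.comapInduce (f : V' ↪ V) (G : SimpleGraph V) (s : Set V) :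
    (G.comap f).induce (f ⁻¹' s) ↪g G.induce s where
  toFun x := ⟨f x, x.2⟩
  inj' _ _ h := Subtype.ext (f.injective (congrArg Subtype.val h))
  map_rel_iff' := Iff.rfl

end SimpleGraph

section

variable {U V V' W : Type*} {G : SimpleGraph V} {X Y : Set V}

lemma InducedFree.of_embedding {F : SimpleGraph U} {H : SimpleGraph W} (f : G ↪g H)
    (h : InducedFree F H) : InducedFree F G :=
  fun ⟨e⟩ => h ⟨f.comp e⟩

lemma InducedFree.exists_chord {H : SimpleGraph W} (h : InducedFree (pathGraph 4) H)
    {a b c d : W} (hab : H.Adj a b) (hbc : H.Adj b c) (hcd : H.Adj c d) :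
    H.Adj a c ∨ H.Adj a d ∨ H.Adj b d := by
  by_contra! hno
  obtain ⟨hac, had, hbd⟩ := hno
  set f := ![a, b, c, d]
  have hadj : ∀ i j, H.Adj (f i) (f j) ↔ (pathGraph 4).Adj i j := by
    intro i j
    fin_cases i <;> fin_cases j <;>
      simp [f, pathGraph_adj, H.adj_comm, hab, hbc, hcd, hac, had, hbd]
  -- distinct vertices of `P4` have distinct neighbourhoods, so `f` is injective
  have hnbr : ∀ i j : Fin 4, (∀ k, (pathGraph 4).Adj i k ↔ (pathGraph 4).Adj j k) → i = j := by
    simp only [pathGraph_adj]; decide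
  refine h ⟨⟨⟨f, fun i j hij => hnbr i j fun k => ?_⟩, hadj _ _⟩⟩
  rw [← hadj, ← hadj, hij]

lemma CompleteTo.symm (h : CompleteTo G X Y) : CompleteTo G Y X :=
  fun y hy x hx => (h x hx y hy).symm

lemma AnticompleteTo.symm (h : AnticompleteTo G X Y) : AnticompleteTo G Y X :=
  fun y hy x hx hxy => h x hx y hy hxy.symm

lemma CompleteTo.disjoint (h : CompleteTo G X Y) : Disjoint X Y :=
  Set.disjoint_left.2 fun x hX hY => G.loopless.irrefl x (h x hX x hY)

lemma CompleteTo.anticompleteTo_of_compl (h : CompleteTo Gᶜ X Y) : AnticompleteTo G X Y :=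
  fun x hx y hy => (h x hx y hy).2

lemma CompleteTo.comap (h : CompleteTo G X Y) (f : V' → V) :
    CompleteTo (G.comap f) (f ⁻¹' X) (f ⁻¹' Y) :=
  fun _ hx _ hy => h _ hx _ hy

lemma AnticompleteTo.comap (h : AnticompleteTo G X Y) (f : V' → V) :
    AnticompleteTo (G.comap f) (f ⁻¹' X) (f ⁻¹' Y) :=
  fun _ hx _ hy => h _ hx _ hy

lemma isHomogeneousSet_singleton (G : SimpleGraph V) (x : V) : IsHomogeneousSet G {x} :=
  fun _ _ ⟨_, hy, hvy⟩ _ hz => (hz.trans hy.symm) ▸ hvy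

lemma IsHomogeneousSet.comap (h : IsHomogeneousSet G X) (f : V' → V) :
    IsHomogeneousSet (G.comap f) (f ⁻¹' X) :=
  fun v hv ⟨u, hu, hvu⟩ w hw => h (f v) hv ⟨f u, hu, hvu⟩ (f w) hw

lemma IsHomogeneousSet.subset_of_isNClique [Finite V] {K : Finset V} (hX : IsHomogeneousSet G X)
    (hXK : G.IsClique X) (hK : G.IsNClique G.cliqueNum K) {x : V} (hx : x ∈ X) (hxK : x ∈ K) :
    X ⊆ K := by
  classical
  intro y hy
  by_contra hyK
  have hclique : G.IsClique (insert y K : Finset V) := by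
    rw [Finset.coe_insert]
    refine hK.isClique.insert fun k hk hyk => ?_
    by_cases hkX : k ∈ X
    · exact hXK hy hkX hyk
    · have hkx : G.Adj k x := hK.isClique hk hxK fun h => hkX (h ▸ hx)
      exact (hX k hkX ⟨x, hx, hkx⟩ y hy).symm
  have := hclique.card_le_cliqueNum
  rw [Finset.card_insert_of_notMem hyK, hK.card_eq] at this
  omega

lemma hasGoodStableSet_of_hom [Fintype V] [Fintype W] {H : SimpleGraph W} (φ : G →g H)
    (hω : H.cliqueNum ≤ G.cliqueNum) (h : HasGoodStableSet H) : HasGoodStableSet G := by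
  classical
  obtain ⟨S, hS, hgood⟩ := h
  refine ⟨φ ⁻¹' S, fun x hx y hy _ hxy => hS hx hy (φ.map_adj hxy).ne (φ.map_adj hxy),
    fun K hK => ?_⟩
  have hK' := hK.image_hom φ
  rw [le_antisymm (cliqueNum_le_of_hom φ) hω] at hK'
  obtain ⟨_, hv, hvK⟩ := hgood _ hK'
  obtain ⟨x, hx, rfl⟩ := Finset.mem_image.1 hvK
  exact ⟨x, hv, hx⟩

end

namespace SimpleGraph

variable {V : Type*} {G : SimpleGraph V}

def P4FreeOn (G : SimpleGraph V) (s : Set V) : Prop :=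
  ∀ ⦃a⦄, a ∈ s → ∀ ⦃b⦄, b ∈ s → ∀ ⦃c⦄, c ∈ s → ∀ ⦃d⦄, d ∈ s →
    G.Adj a b → G.Adj b c → G.Adj c d → G.Adj a c ∨ G.Adj a d ∨ G.Adj b d

lemma p4FreeOn_of_inducedFree {s : Set V}
    (h : InducedFree (pathGraph 4) (G.induce s)) : G.P4FreeOn s :=
  fun a ha b hb c hc d hd hab hbc hcd =>
    h.exists_chord (a := ⟨a, ha⟩) (b := ⟨b, hb⟩) (c := ⟨c, hc⟩) (d := ⟨d, hd⟩) hab hbc hcd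

lemma P4FreeOn.mono {s t : Set V} (h : G.P4FreeOn s) (hts : t ⊆ s) : G.P4FreeOn t :=
  fun _ ha _ hb _ hc _ hd => h (hts ha) (hts hb) (hts hc) (hts hd)

/-- `P4` is self-complementary: an induced path `a - b - c - d` of `Gᶜ` is the path
`c - a - d - b` of `G`. -/
lemma P4FreeOn.compl {s : Set V} (h : G.P4FreeOn s) : Gᶜ.P4FreeOn s := by
  intro a ha b hb c hc d hd hab hbc hcd
  by_contra! hno
  simp only [compl_adj, not_and, not_not] at hab hbc hcd hno
  obtain ⟨hac, had, hbd⟩ := hno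
  have hac' : G.Adj a c := hac (by rintro rfl; exact hcd.2 (had hcd.1))
  have had' : G.Adj a d := had (by rintro rfl; exact hab.2 (hbd hab.1.symm).symm)
  have hbd' : G.Adj b d := hbd (by rintro rfl; exact hab.2 (had hab.1))
  rcases h hc ha hd hb hac'.symm had' hbd'.symm with h | h | h
  exacts [hcd.2 h, hbc.2 h.symm, hab.2 h]

def IsJoinOn (G : SimpleGraph V) (s : Set V) : Prop :=
  ∃ X Y : Set V, X.Nonempty ∧ Y.Nonempty ∧ X ∪ Y = s ∧ CompleteTo G X Y

/-- If `v` is complete to neither `X` nor `Y`, its neighbourhood is complete to the rest of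
`insert v (X ∪ Y)`: for non-neighbours `x₀ ∈ X`, `y₀ ∈ Y` of `v`, a missing edge `w z` would
leave an induced path `v - w - y₀ - z` or `v - w - x₀ - z`. -/
lemma P4FreeOn.isJoinOn_insert {X Y : Set V} {v : V} (h : G.P4FreeOn (insert v (X ∪ Y)))
    (hw : ∃ w ∈ X ∪ Y, G.Adj v w) (hXY : CompleteTo G X Y) (hX : X.Nonempty) (hY : Y.Nonempty) :
    G.IsJoinOn (insert v (X ∪ Y)) := by
  by_cases hvX : ∀ x ∈ X, G.Adj v x
  · refine ⟨X, insert v Y, hX, Set.insert_nonempty v Y, Set.union_insert, ?_⟩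
    rintro x hx y (rfl | hy)
    exacts [(hvX x hx).symm, hXY x hx y hy]
  by_cases hvY : ∀ y ∈ Y, G.Adj v y
  · refine ⟨Y, insert v X, hY, Set.insert_nonempty v X,
      by rw [Set.union_insert, Set.union_comm], ?_⟩
    rintro y hy x (rfl | hx)
    exacts [(hvY y hy).symm, hXY.symm y hy x hx]
  push Not at hvX hvY
  obtain ⟨x₀, hx₀, hvx₀⟩ := hvX
  obtain ⟨y₀, hy₀, hvy₀⟩ := hvY
  have hmem : ∀ {u}, u ∈ X ∪ Y → u ∈ insert v (X ∪ Y) := Set.mem_insert_of_mem v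
  refine ⟨{w ∈ insert v (X ∪ Y) | G.Adj v w}, {w ∈ insert v (X ∪ Y) | ¬G.Adj v w},
    ?_, ⟨v, Set.mem_insert v _, G.loopless.irrefl v⟩,
    by rw [← Set.sep_or]; simp only [em, Set.sep_true], ?_⟩
  · obtain ⟨w, hw, hvw⟩ := hw
    exact ⟨w, hmem hw, hvw⟩
  rintro w ⟨hw, hvw⟩ z ⟨hz | hz, hvz⟩
  · exact hz ▸ hvw.symm
  have hw : w ∈ X ∪ Y := hw.resolve_left fun h => G.loopless.irrefl v (h ▸ hvw)
  rcases hw with hwX | hwY <;> rcases hz with hzX | hzY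
  · rcases h (Set.mem_insert v _) (hmem (.inl hwX)) (hmem (.inr hy₀)) (hmem (.inl hzX)) hvw
      (hXY w hwX y₀ hy₀) (hXY z hzX y₀ hy₀).symm with h | h | h
    exacts [absurd h hvy₀, absurd h hvz, h]
  · exact hXY w hwX z hzY
  · exact hXY.symm w hwY z hzX
  · rcases h (Set.mem_insert v _) (hmem (.inr hwY)) (hmem (.inl hx₀)) (hmem (.inr hzY)) hvw
      (hXY x₀ hx₀ w hwY).symm (hXY x₀ hx₀ z hzY) with h | h | h
    exacts [absurd h hvx₀, absurd h hvz, h]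

/-- Seinsche's theorem. -/
theorem P4FreeOn.isJoinOn_or_isJoinOn_compl [Finite V] {s : Set V} (h : G.P4FreeOn s)
    (hs : s.Nontrivial) : G.IsJoinOn s ∨ Gᶜ.IsJoinOn s := by
  induction s using WellFoundedLT.induction with
  | ind s ih =>
  obtain ⟨v, hv, u, hu, hvu⟩ := hs
  have hsv : insert v (s \ {v}) = s := Set.insert_sdiff_self_of_mem hv
  have hu' : u ∈ s \ {v} := ⟨hu, hvu.symm⟩
  have hsplit : ∀ {H : SimpleGraph V}, (∀ w ∈ s \ {v}, H.Adj v w) → H.IsJoinOn s :=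
    fun hv' => ⟨{v}, s \ {v}, Set.singleton_nonempty v, ⟨u, hu'⟩, hsv,
      fun _ hx y hy => (Set.mem_singleton_iff.1 hx) ▸ hv' y hy⟩
  by_cases hadj : ∀ w ∈ s \ {v}, G.Adj v w
  · exact .inl (hsplit hadj)
  by_cases hnadj : ∀ w ∈ s \ {v}, ¬G.Adj v w
  · exact .inr (hsplit fun w hw => ⟨fun h => hw.2 h.symm, hnadj w hw⟩)
  push Not at hadj hnadj
  obtain ⟨z, hz, hvz⟩ := hadj
  obtain ⟨w, hw, hvw⟩ := hnadj
  have hvz' : Gᶜ.Adj v z := ⟨fun h => hz.2 h.symm, hvz⟩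
  rw [← hsv] at h ⊢
  rcases ih _ (Set.sdiff_singleton_ssubset.2 hv) (h.mono (Set.subset_insert v _))
    ⟨w, hw, z, hz, fun hwz => hvz (hwz ▸ hvw)⟩ with
    ⟨X, Y, hX, hY, hXY, hc⟩ | ⟨X, Y, hX, hY, hXY, hc⟩
  all_goals rw [← hXY] at h hw hz ⊢
  · exact .inl (h.isJoinOn_insert ⟨w, hw, hvw⟩ hc hX hY)
  · exact .inr (h.compl.isJoinOn_insert ⟨z, hz, hvz'⟩ hc hX hY)

/-- `χ(G[s]) = ω(G[s])`, witnessed by a colouring `c` and a clique `K`. -/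
def CliqueColorableOn (G : SimpleGraph V) (s : Set V) : Prop :=
  ∃ (c : V → ℕ) (K : Finset V), ↑K ⊆ s ∧ G.IsClique (K : Set V) ∧ (∀ x ∈ s, c x < K.card) ∧
    ∀ x ∈ s, ∀ y ∈ s, G.Adj x y → c x ≠ c y

lemma CliqueColorableOn.union_of_anticompleteTo {X Y : Set V} (hX : G.CliqueColorableOn X)
    (hY : G.CliqueColorableOn Y) (hXY : AnticompleteTo G X Y) : G.CliqueColorableOn (X ∪ Y) := by
  classical
  obtain ⟨c₁, K₁, hK₁X, hK₁, hc₁K, hc₁⟩ := hX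
  obtain ⟨c₂, K₂, hK₂Y, hK₂, hc₂K, hc₂⟩ := hY
  have hY_of : ∀ {x}, x ∈ X ∪ Y → x ∉ X → x ∈ Y := fun hx hxX => hx.resolve_left hxX
  refine ⟨fun x => if x ∈ X then c₁ x else c₂ x, if K₁.card ≤ K₂.card then K₂ else K₁,
    ?_, ?_, ?_, ?_⟩
  · split_ifs
    exacts [hK₂Y.trans Set.subset_union_right, hK₁X.trans Set.subset_union_left]
  · split_ifs
    exacts [hK₂, hK₁]
  · intro x hx
    split_ifs <;> grind
  · intro x hx y hy hxy
    by_cases hxX : x ∈ X <;> by_cases hyX : y ∈ X <;> simp only [hxX, hyX, if_true, if_false]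
    · exact hc₁ x hxX y hyX hxy
    · exact absurd hxy (hXY x hxX y (hY_of hy hyX))
    · exact absurd hxy.symm (hXY y hyX x (hY_of hx hxX))
    · exact hc₂ x (hY_of hx hxX) y (hY_of hy hyX) hxy

lemma CliqueColorableOn.union_of_completeTo {X Y : Set V} (hX : G.CliqueColorableOn X)
    (hY : G.CliqueColorableOn Y) (hXY : CompleteTo G X Y) : G.CliqueColorableOn (X ∪ Y) := by
  classical
  obtain ⟨c₁, K₁, hK₁X, hK₁, hc₁K, hc₁⟩ := hX
  obtain ⟨c₂, K₂, hK₂Y, hK₂, hc₂K, hc₂⟩ := hY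
  have hY_of : ∀ {x}, x ∈ X ∪ Y → x ∉ X → x ∈ Y := fun hx hxX => hx.resolve_left hxX
  have hdisj : Disjoint K₁ K₂ := Finset.disjoint_left.2 fun x hx₁ hx₂ =>
    G.loopless.irrefl x (hXY x (hK₁X hx₁) x (hK₂Y hx₂))
  refine ⟨fun x => if x ∈ X then c₁ x else K₁.card + c₂ x, K₁ ∪ K₂, ?_, ?_, ?_, ?_⟩
  · rw [Finset.coe_union]
    exact Set.union_subset_union hK₁X hK₂Y
  · have := G.symm
    rw [Finset.coe_union]
    exact Set.pairwise_union_of_symm.2 ⟨hK₁, hK₂, fun x hx y hy _ => hXY x (hK₁X hx) y (hK₂Y hy)⟩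
  · intro x hx
    rw [Finset.card_union_of_disjoint hdisj]
    by_cases hxX : x ∈ X <;> simp only [hxX, if_true, if_false]
    · exact (hc₁K x hxX).trans_le (Nat.le_add_right _ _)
    · exact Nat.add_lt_add_left (hc₂K x (hY_of hx hxX)) _
  · intro x hx y hy hxy
    by_cases hxX : x ∈ X <;> by_cases hyX : y ∈ X <;> simp only [hxX, hyX, if_true, if_false]
    · exact hc₁ x hxX y hyX hxy
    · exact ((hc₁K x hxX).trans_le (Nat.le_add_right _ _)).ne
    · exact ((hc₁K y hyX).trans_le (Nat.le_add_right _ _)).ne'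
    · exact fun h => hc₂ x (hY_of hx hxX) y (hY_of hy hyX) hxy (Nat.add_left_cancel h)

theorem P4FreeOn.cliqueColorableOn [Finite V] {s : Set V} (h : G.P4FreeOn s) :
    G.CliqueColorableOn s := by
  induction s using WellFoundedLT.induction with
  | ind s ih =>
  rcases s.subsingleton_or_nontrivial with hs | hs
  · refine ⟨0, s.toFinite.toFinset, by simp, by simpa using IsClique.of_subsingleton hs,
      fun x hx => ?_, fun x hx y hy hxy => absurd (hs hx hy) hxy.ne⟩
    exact Finset.card_pos.2 ⟨x, by simpa using hx⟩
  have hlt : ∀ {X Y : Set V}, Disjoint X Y → Y.Nonempty → X < X ∪ Y := fun hXY ⟨y, hy⟩ =>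
    Set.ssubset_union_left_iff.2 fun hYX => hXY.ne_of_mem (hYX hy) hy rfl
  rcases h.isJoinOn_or_isJoinOn_compl hs with ⟨X, Y, hX, hY, rfl, hc⟩ | ⟨X, Y, hX, hY, rfl, hc⟩
  all_goals
    have hXc := ih X (hlt hc.disjoint hY) (h.mono Set.subset_union_left)
    have hYc := ih Y (Set.union_comm X Y ▸ hlt hc.disjoint.symm hX) (h.mono Set.subset_union_right)
  · exact hXc.union_of_completeTo hYc hc
  · exact hXc.union_of_anticompleteTo hYc hc.anticompleteTo_of_compl

structure IsCliqueRetraction (G : SimpleGraph V) (s : Set V) (r : V → V) : Prop where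
  mapsTo : Set.MapsTo r s s
  idempotent : ∀ x ∈ s, r (r x) = r x
  isClique_image : G.IsClique (r '' s)
  map_adj : ∀ x ∈ s, ∀ y ∈ s, G.Adj x y → G.Adj (r x) (r y)

open Finset in
/-- Send `x` to the vertex of the same colour in `K`; the colouring maps `K` bijectively onto
the colours. -/
lemma CliqueColorableOn.exists_isCliqueRetraction {s : Set V} (h : G.CliqueColorableOn s) :
    ∃ r, G.IsCliqueRetraction s r := by
  classical
  obtain ⟨c, K, hKs, hK, hcK, hc⟩ := h
  have hinj : Set.InjOn c K := fun x hx y hy hxy => by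
    by_contra hne
    exact hc x (hKs hx) y (hKs hy) (hK hx hy hne) hxy
  have himage : K.image c = range K.card := by
    refine eq_of_subset_of_card_le (fun n hn => ?_) (by rw [card_range, card_image_of_injOn hinj])
    obtain ⟨x, hx, rfl⟩ := mem_image.1 hn
    exact mem_range.2 (hcK x (hKs hx))
  have hex : ∀ x ∈ s, ∃ k ∈ K, c k = c x := fun x hx =>
    mem_image.1 (himage ▸ mem_range.2 (hcK x hx))
  choose! r hrK hrc using hex
  refine ⟨r, fun x hx => hKs (hrK x hx), fun x hx => ?_, hK.subset ?_, fun x hx y hy hxy => ?_⟩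
  · exact hinj (hrK _ (hKs (hrK x hx))) (hrK x hx) (hrc _ (hKs (hrK x hx)))
  · rintro _ ⟨x, hx, rfl⟩
    exact hrK x hx
  · refine hK (hrK x hx) (hrK y hy) fun hr => hc x hx y hy hxy ?_
    rw [← hrc x hx, ← hrc y hy, hr]

/-- Homogeneous sets are also called modules; `b x` is the part containing `x`. -/
structure IsModularPartition (G : SimpleGraph V) (b : V → Set V) : Prop where
  mem_self : ∀ x, x ∈ b x
  eq_of_mem : ∀ {x y}, y ∈ b x → b y = b x
  isHomogeneousSet : ∀ x, IsHomogeneousSet G (b x)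

namespace IsModularPartition

variable {b : V → Set V} (hb : G.IsModularPartition b)
include hb

lemma adj_of_adj {x y x' y' : V} (hxy : b x ≠ b y) (hadj : G.Adj x y) (hx' : x' ∈ b x)
    (hy' : y' ∈ b y) : G.Adj x' y' := by
  have hyx : G.Adj y x' :=
    hb.isHomogeneousSet x y (fun h => hxy (hb.eq_of_mem h).symm) ⟨x, hb.mem_self x, hadj.symm⟩
      x' hx'
  refine hb.isHomogeneousSet y x' (fun h => hxy ?_) ⟨y, hb.mem_self y, hyx.symm⟩ y' hy'
  rw [← hb.eq_of_mem hx', hb.eq_of_mem h]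

/-- Glue retractions of the parts onto cliques; adjacency between different parts is preserved
because the parts are homogeneous. -/
theorem exists_retraction (hcol : ∀ x, G.CliqueColorableOn (b x)) :
    ∃ r : G →g G, (∀ x, r x ∈ b x) ∧ (∀ x, r (r x) = r x) ∧
      ∀ x, G.IsClique (Set.range r ∩ b x) := by
  have : ∀ B : Set V, ∃ r, B ∈ Set.range b → G.IsCliqueRetraction B r := fun B => by
    by_cases hB : B ∈ Set.range b
    · obtain ⟨x, rfl⟩ := hB
      obtain ⟨r, hr⟩ := (hcol x).exists_isCliqueRetraction
      exact ⟨r, fun _ => hr⟩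
    · exact ⟨id, fun h => absurd h hB⟩
  choose ρ hρ using this
  have hρ : ∀ x, G.IsCliqueRetraction (b x) (ρ (b x)) := fun x => hρ _ (Set.mem_range_self x)
  set r : V → V := fun x => ρ (b x) x
  have hr : ∀ {x y}, y ∈ b x → r y = ρ (b x) y := fun h => by simp only [r, hb.eq_of_mem h]
  have hrb : ∀ x, r x ∈ b x := fun x => (hρ x).mapsTo (hb.mem_self x)
  refine ⟨⟨r, fun {x y} hxy => ?_⟩, hrb, fun x => ?_, fun x => ?_⟩
  · by_cases hy : y ∈ b x
    · rw [hr (hb.mem_self x), hr hy]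
      exact (hρ x).map_adj x (hb.mem_self x) y hy hxy
    · exact hb.adj_of_adj (fun h : b x = b y => hy (h ▸ hb.mem_self y)) hxy (hrb x) (hrb y)
  · change r (r x) = r x
    rw [hr (hrb x), hr (hb.mem_self x)]
    exact (hρ x).idempotent x (hb.mem_self x)
  · refine (hρ x).isClique_image.subset ?_
    rintro _ ⟨⟨y, rfl⟩, hyx⟩
    change r y ∈ b x at hyx
    have hy : y ∈ b x := by
      rw [← hb.eq_of_mem hyx, hb.eq_of_mem (hrb y)]
      exact hb.mem_self y
    exact ⟨y, hy, (hr hy).symm⟩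

end IsModularPartition

lemma Hom.exists_surjective_comap_range [Finite V] (r : G →g G) (hr : ∀ x, r (r x) = r x) :
    ∃ (n : ℕ) (f : Fin n ↪ V) (ρ : G →g G.comap f),
      Set.range f = Set.range r ∧ Function.Surjective ρ := by
  set e := (Finite.equivFin (Set.range r)).symm
  set f : Fin _ ↪ V := ⟨fun i => e i, Subtype.val_injective.comp e.injective⟩
  have hfρ : ∀ x, f (e.symm ⟨r x, x, rfl⟩) = r x := fun x =>
    congrArg Subtype.val (e.apply_symm_apply _)
  refine ⟨_, f, ⟨fun x => e.symm ⟨r x, x, rfl⟩, fun {x y} hxy => ?_⟩, ?_, fun i => ?_⟩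
  · change G.Adj (f _) (f _)
    rw [hfρ, hfρ]
    exact r.map_adj hxy
  · ext v
    refine ⟨fun ⟨i, hi⟩ => hi ▸ (e i).2, fun hv =>
      ⟨e.symm ⟨v, hv⟩, congrArg Subtype.val (e.apply_symm_apply _)⟩⟩
  · obtain ⟨y, hy⟩ := (e i).2
    refine ⟨f i, e.symm_apply_eq.2 (Subtype.ext ?_)⟩
    change r (e i) = e i
    rw [← hy, hr]

theorem IsModularPartition.exists_comap [Finite V] {b : V → Set V} (hb : G.IsModularPartition b)
    (hcol : ∀ x, G.CliqueColorableOn (b x)) :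
    ∃ (n : ℕ) (f : Fin n ↪ V) (ρ : G →g G.comap f), Function.Surjective ρ ∧
      (∀ x, (f ⁻¹' b x).Nonempty) ∧ ∀ x, (G.comap f).IsClique (f ⁻¹' b x) := by
  obtain ⟨r, hrb, hrr, hrK⟩ := hb.exists_retraction hcol
  obtain ⟨n, f, ρ, hf, hρ⟩ := r.exists_surjective_comap_range hrr
  refine ⟨n, f, ρ, hρ, fun x => ?_, fun x u hu v hv huv => ?_⟩
  · obtain ⟨v, hv⟩ := hf ▸ Set.mem_range_self x
    exact ⟨v, show f v ∈ b x from hv ▸ hrb x⟩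
  · exact hrK x ⟨hf ▸ Set.mem_range_self u, hu⟩ ⟨hf ▸ Set.mem_range_self v, hv⟩ (f.injective.ne huv)

namespace IsModularPartition

variable {V' : Type*} [Fintype V] [Fintype V'] [Nonempty V] {b : V → Set V}

/-- Pick one vertex of `G.comap f` in each part; those in the parts met by a good stable set of
`G` form a good stable set, as a maximum clique meeting a part contains all of its vertices. -/
theorem hasGoodStableSet_comap (hb : G.IsModularPartition b) (f : V' ↪ V)
    (hω : G.cliqueNum ≤ (G.comap f).cliqueNum) (hne : ∀ x, (f ⁻¹' b x).Nonempty)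
    (hclique : ∀ x, (G.comap f).IsClique (f ⁻¹' b x)) (h : HasGoodStableSet G) :
    HasGoodStableSet (G.comap f) := by
  classical
  obtain ⟨S, hS, hgood⟩ := h
  have : Nonempty V' := (hne (Classical.arbitrary V)).to_subtype.map Subtype.val
  set σ : V → V' := fun x => Classical.epsilon fun v => f v ∈ b x
  have hσ : ∀ x, f (σ x) ∈ b x := fun x => Classical.epsilon_spec (hne x)
  have hσ_eq : ∀ {x y}, y ∈ b x → σ y = σ x := fun h => by simp only [σ, hb.eq_of_mem h]
  refine ⟨σ '' S, ?_, fun K hK => ?_⟩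
  · rintro _ ⟨x, hx, rfl⟩ _ ⟨y, hy, rfl⟩ hne' hadj
    by_cases hyx : y ∈ b x
    · exact hne' (hσ_eq hyx).symm
    have hxy : b (f (σ x)) ≠ b (f (σ y)) := by
      rw [hb.eq_of_mem (hσ x), hb.eq_of_mem (hσ y)]
      exact fun h => hyx (h ▸ hb.mem_self y)
    refine hS hx hy (fun h => hyx (h ▸ hb.mem_self x)) (hb.adj_of_adj hxy hadj ?_ ?_)
    · rw [hb.eq_of_mem (hσ x)]; exact hb.mem_self x
    · rw [hb.eq_of_mem (hσ y)]; exact hb.mem_self y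
  · have hKG := hK.image_hom (Embedding.comap f G).toHom
    rw [le_antisymm (cliqueNum_le_of_hom (Embedding.comap f G).toHom) hω] at hKG
    obtain ⟨_, hs, hsK⟩ := hgood _ hKG
    obtain ⟨k, hk, rfl⟩ := Finset.mem_image.1 hsK
    refine ⟨σ (f k), ⟨f k, hs, rfl⟩, ?_⟩
    exact ((hb.isHomogeneousSet (f k)).comap f).subset_of_isNClique (hclique (f k)) hK
      (hb.mem_self (f k)) hk (hσ (f k))

end IsModularPartition

end SimpleGraph

section

variable {V : Type*} {G : SimpleGraph V} {A : Fin 7 → Set V}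

/-- The parts of the modular partition of a graph with an `H`-partition: the sets `A 0, …, A 4`,
the singletons inside `A 5` (which need not be homogeneous) and the components of `G[A 6]`. -/
def hBlock (G : SimpleGraph V) (A : Fin 7 → Set V) (x : V) : Set V :=
  {y | y = x ∨ (∃ i : Fin 7, i < 5 ∧ x ∈ A i ∧ y ∈ A i) ∨
    ∃ hx : x ∈ A 6, y ∈ Subtype.val '' ((G.induce (A 6)).connectedComponentMk ⟨x, hx⟩).supp}

namespace IsHPartition

variable (hA : IsHPartition G A)
include hA

lemma exists_mem (x : V) : ∃ i, x ∈ A i :=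
  Set.mem_iUnion.1 (hA.covers ▸ Set.mem_univ x)

lemma eq_of_mem {x : V} {i j : Fin 7} (hi : x ∈ A i) (hj : x ∈ A j) : i = j := by
  by_contra hij
  exact Set.disjoint_left.1 (hA.disjoint i j hij) hi hj

lemma hBlock_eq_of_lt {x : V} {i : Fin 7} (hi : i < 5) (hx : x ∈ A i) : hBlock G A x = A i := by
  ext y
  refine ⟨?_, fun hy => .inr (.inl ⟨i, hi, hx, hy⟩)⟩
  rintro (rfl | ⟨j, -, hxj, hyj⟩ | ⟨hx6, -⟩)
  · exact hx
  · exact hA.eq_of_mem hxj hx ▸ hyj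
  · exact absurd (hA.eq_of_mem hx hx6) (by omega)

lemma hBlock_eq_of_mem_five {x : V} (hx : x ∈ A 5) : hBlock G A x = {x} := by
  ext y
  refine ⟨?_, fun hy => .inl hy⟩
  rintro (rfl | ⟨j, hj, hxj, -⟩ | ⟨hx6, -⟩)
  · rfl
  · exact absurd (hA.eq_of_mem hxj hx) (by omega)
  · exact absurd (hA.eq_of_mem hx hx6) (by decide)

lemma hBlock_eq_of_mem_six {x : V} (hx : x ∈ A 6) :
    hBlock G A x = Subtype.val '' ((G.induce (A 6)).connectedComponentMk ⟨x, hx⟩).supp := by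
  ext y
  refine ⟨?_, fun hy => .inr (.inr ⟨hx, hy⟩)⟩
  rintro (rfl | ⟨j, hj, hxj, -⟩ | ⟨_, hy⟩)
  · exact ⟨⟨y, hx⟩, rfl, rfl⟩
  · exact absurd (hA.eq_of_mem hxj hx) (by omega)
  · exact hy

lemma hBlock_cases (x : V) :
    (∃ i < 5, x ∈ A i ∧ hBlock G A x = A i) ∨ (x ∈ A 5 ∧ hBlock G A x = {x}) ∨
      ∃ hx : x ∈ A 6,
        hBlock G A x = Subtype.val '' ((G.induce (A 6)).connectedComponentMk ⟨x, hx⟩).supp := by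
  obtain ⟨i, hi⟩ := hA.exists_mem x
  by_cases h5 : i < 5
  · exact .inl ⟨i, h5, hi, hA.hBlock_eq_of_lt h5 hi⟩
  obtain rfl | rfl : i = 5 ∨ i = 6 := by omega
  · exact .inr (.inl ⟨hi, hA.hBlock_eq_of_mem_five hi⟩)
  · exact .inr (.inr ⟨hi, hA.hBlock_eq_of_mem_six hi⟩)

lemma hBlock_subset {x : V} {i : Fin 7} (hx : x ∈ A i) : hBlock G A x ⊆ A i := by
  rcases hA.hBlock_cases x with ⟨j, -, hxj, h⟩ | ⟨-, h⟩ | ⟨hx6, h⟩ <;> rw [h]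
  · exact hA.eq_of_mem hxj hx ▸ subset_rfl
  · exact Set.singleton_subset_iff.2 hx
  · rintro _ ⟨y, -, rfl⟩
    exact hA.eq_of_mem hx6 hx ▸ y.2

lemma completeTo_or_anticompleteTo {i j : Fin 7} (hi : i < 5) (hji : j ≠ i) :
    CompleteTo G (A j) (A i) ∨ AnticompleteTo G (A j) (A i) := by
  obtain ⟨-, -, -, -, c12, c15, c16, a13, a14, a17, c32, c34, c36, a35, a37, c45, c46, a42, a47,
    a25, a26, a27, a56, a57, -⟩ := hA
  fin_cases i <;> fin_cases j <;> simp at hi hji <;>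
    solve_by_elim only [Or.inl, Or.inr, CompleteTo.symm, AnticompleteTo.symm, c12, c15, c16, a13,
      a14, a17, c32, c34, c36, a35, a37, c45, c46, a42, a47, a25, a26, a27, a56, a57]

lemma isHomogeneousSet_of_lt {i : Fin 7} (hi : i < 5) : IsHomogeneousSet G (A i) := by
  intro v hv ⟨x, hx, hvx⟩ y hy
  obtain ⟨j, hj⟩ := hA.exists_mem v
  rcases hA.completeTo_or_anticompleteTo hi (fun h => hv (h ▸ hj)) with h | h
  · exact h v hj y hy
  · exact absurd hvx (h v hj x hx)

theorem isModularPartition : G.IsModularPartition (hBlock G A) where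
  mem_self _ := .inl rfl
  eq_of_mem {x y} hy := by
    rcases hA.hBlock_cases x with ⟨i, hi, -, h⟩ | ⟨-, h⟩ | ⟨hx, h⟩ <;> rw [h] at hy ⊢
    · exact hA.hBlock_eq_of_lt hi hy
    · rw [Set.mem_singleton_iff.1 hy, h]
    · obtain ⟨⟨y, hy6⟩, hyx, rfl⟩ := hy
      rw [hA.hBlock_eq_of_mem_six hy6, ← (ConnectedComponent.mem_supp_iff _ _).1 hyx]
  isHomogeneousSet x := by
    rcases hA.hBlock_cases x with ⟨i, hi, -, h⟩ | ⟨-, h⟩ | ⟨hx, h⟩ <;> rw [h]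
    · exact hA.isHomogeneousSet_of_lt hi
    · exact isHomogeneousSet_singleton G x
    · exact hA.hom _

theorem p4FreeOn_hBlock (x : V) : G.P4FreeOn (hBlock G A x) := by
  rcases hA.hBlock_cases x with ⟨i, -, -, h⟩ | ⟨-, h⟩ | ⟨_, h⟩ <;> rw [h]
  · exact p4FreeOn_of_inducedFree (hA.p4free i)
  · exact fun a ha b hb _ _ _ _ hab _ _ => absurd (ha.trans hb.symm) hab.ne
  · refine (p4FreeOn_of_inducedFree (hA.p4free 6)).mono ?_
    rintro _ ⟨y, -, rfl⟩
    exact y.2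

variable {V' : Type*}

theorem comap (f : V' ↪ V) (hne : ∀ i, (f ⁻¹' A i).Nonempty)
    (hhom : ∀ C : ((G.comap f).induce (f ⁻¹' A 6)).ConnectedComponent,
      IsHomogeneousSet (G.comap f) (Subtype.val '' C.supp)) :
    IsHPartition (G.comap f) (fun i => f ⁻¹' A i) where
  nonempty := hne
  covers := by simp [← Set.preimage_iUnion, hA.covers]
  disjoint i j h := (hA.disjoint i j h).preimage f
  p4free i := InducedFree.of_embedding (Embedding.comapInduce f G (A i)) (hA.p4free i)
  c12 := hA.c12.comap f
  c15 := hA.c15.comap f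
  c16 := hA.c16.comap f
  a13 := hA.a13.comap f
  a14 := hA.a14.comap f
  a17 := hA.a17.comap f
  c32 := hA.c32.comap f
  c34 := hA.c34.comap f
  c36 := hA.c36.comap f
  a35 := hA.a35.comap f
  a37 := hA.a37.comap f
  c45 := hA.c45.comap f
  c46 := hA.c46.comap f
  a42 := hA.a42.comap f
  a47 := hA.a47.comap f
  a25 := hA.a25.comap f
  a26 := hA.a26.comap f
  a27 := hA.a27.comap f
  a56 := hA.a56.comap f
  a57 := hA.a57.comap f
  hom := hhom

lemma image_supp_comap {f : V' ↪ V} (hclique : ∀ x, (G.comap f).IsClique (f ⁻¹' hBlock G A x))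
    (u : f ⁻¹' A 6) :
    Subtype.val '' (((G.comap f).induce (f ⁻¹' A 6)).connectedComponentMk u).supp =
      f ⁻¹' hBlock G A (f u) := by
  ext v
  constructor
  · rintro ⟨v, hv, rfl⟩
    have hreach := ((ConnectedComponent.exact hv).map (Embedding.comapInduce f G (A 6)).toHom)
    rw [Set.mem_preimage, hA.hBlock_eq_of_mem_six u.2]
    exact ⟨_, ConnectedComponent.sound hreach, rfl⟩
  · intro hv
    refine ⟨⟨v, hA.hBlock_subset u.2 hv⟩, ?_, rfl⟩
    rw [ConnectedComponent.mem_supp_iff]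
    by_cases hvu : v = u
    · exact congrArg _ (Subtype.ext hvu)
    · exact ConnectedComponent.connectedComponentMk_eq_of_adj
        (hclique (f u) hv (hA.isModularPartition.mem_self (f u)) hvu)

theorem inClassHStar_comap (hconn : G.Connected) (hfree : P5GemFree G) {f : V' ↪ V}
    {ρ : G →g G.comap f} (hρ : Function.Surjective ρ)
    (hne : ∀ x, (f ⁻¹' hBlock G A x).Nonempty)
    (hclique : ∀ x, (G.comap f).IsClique (f ⁻¹' hBlock G A x)) : InClassHStar (G.comap f) := by
  have hpart : IsHPartition (G.comap f) (fun i => f ⁻¹' A i) := by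
    refine hA.comap f (fun i => ?_) fun C => ?_
    · obtain ⟨x, hx⟩ := hA.nonempty i
      obtain ⟨v, hv⟩ := hne x
      exact ⟨v, hA.hBlock_subset hx hv⟩
    · induction C using ConnectedComponent.ind with | h u =>
      rw [hA.image_supp_comap hclique u]
      exact (hA.isModularPartition.isHomogeneousSet (f u)).comap f
  refine ⟨hconn.map ρ hρ, ⟨InducedFree.of_embedding (Embedding.comap f G) hfree.1,
    InducedFree.of_embedding (Embedding.comap f G) hfree.2⟩, _, hpart, fun i hi => ?_, fun C => ?_⟩
  · obtain ⟨x, hx⟩ := hA.nonempty i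
    rw [← hA.hBlock_eq_of_lt hi hx]
    exact hclique x
  · induction C using ConnectedComponent.ind with | h u =>
    rw [hA.image_supp_comap hclique u]
    exact hclique (f u)

end IsHPartition

end

/-- For every graph `G` in the class `H` there is a graph `G*` in the class `H*` with the same
clique number and chromatic number, such that `G` has a good stable set iff `G*` does. -/
theorem classH_reduces_to_classHStar {V : Type*} [Fintype V] (G : SimpleGraph V)
    (hG : InClassH G) :
    ∃ (n : ℕ) (G' : SimpleGraph (Fin n)), InClassHStar G' ∧
      G.cliqueNum = G'.cliqueNum ∧ G.chromaticNumber = G'.chromaticNumber ∧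
      (HasGoodStableSet G ↔ HasGoodStableSet G') := by
  obtain ⟨hconn, hfree, A, hA⟩ := hG
  have : Nonempty V := hconn.nonempty
  have hb := hA.isModularPartition
  obtain ⟨n, f, ρ, hρ, hne, hclique⟩ :=
    hb.exists_comap fun x => (hA.p4FreeOn_hBlock x).cliqueColorableOn
  set ι := (Embedding.comap f G).toHom
  have hω : (G.comap f).cliqueNum = G.cliqueNum :=
    le_antisymm (cliqueNum_le_of_hom ι) (cliqueNum_le_of_hom ρ)
  refine ⟨n, G.comap f, hA.inClassHStar_comap hconn hfree hρ hne hclique, hω.symm,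
    le_antisymm (chromaticNumber_mono_of_hom ρ) (chromaticNumber_mono_of_hom ι),
    hb.hasGoodStableSet_comap f hω.ge hne hclique, hasGoodStableSet_of_hom ρ hω.le⟩
end

section
/- Let G be a clique expansion of the 5-cycle C5 (i.e., V(G) is partitioned into five non-empty cliques Q_1, …, Q_5 such that for each i mod 5, Q_i is complete to Q_{i-1} ∪ Q_{i+1} and anticomplete to Q_{i-2} ∪ Q_{i+2}), and assume that every proper induced subgraph G' of G satisfies χ(G') ≤ ⌈5ω(G')/4⌉. Then χ(G) ≤ ⌈5ω(G)/4⌉. -/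
open SimpleGraph

/-- `G` is a clique expansion of `H` via `f`: the fibers of `f` are non-empty cliques, and for
vertices in distinct fibers, adjacency in `G` is governed by adjacency in `H`. -/
def IsCliqueExpansion {V W : Type*} (G : SimpleGraph V) (H : SimpleGraph W) (f : V → W) : Prop :=
  Function.Surjective f ∧ (∀ w : W, G.IsClique {v | f v = w}) ∧
    ∀ u v : V, f u ≠ f v → (G.Adj u v ↔ H.Adj (f u) (f v))

/-!
Two adjacent fibers together form a clique, so the fiber sizes `a i` satisfy
`a i + a (i + 1) ≤ ω`; summing over the five edges, `∑ a ≤ 5ω/2`. Hence with `k = ⌈5ω/4⌉` we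
have `a i + a (i + 1) ≤ k` and `∑ a ≤ 2k`, and these two conditions already let one color the
clique expansion with `k` colors: a color class lies in `Q i ∪ Q (i + 2)` for some `i`, so a
coloring amounts to numbers `x i` of colors shared by `Q i` and `Q (i + 2)`, with
`x i + x (i - 2) ≤ a i` and `∑ a - ∑ x ≤ k`. If `2 (a i + a (i + 1)) ≥ ∑ a` for the heaviest edge,
let `Q (i + 2)` and `Q (i + 4)` use only colors of `Q i` and `Q (i + 1)`;
otherwise all `x i ≈ (a i + a (i + 1) + a (i + 2) - a (i + 3) - a (i + 4)) / 2` are nonnegative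
and use about `∑ a / 2 ≤ k` colors.
-/

open Finset

/-- `x i` colors are shared by the non-adjacent fibers `i` and `i + 2` of a clique expansion of
`C5` with fiber sizes `a`; the remaining colors of each fiber are private to it. -/
def HasC5Coloring (a : Fin 5 → ℕ) (k : ℕ) : Prop :=
  ∃ x : Fin 5 → ℕ, (∀ i, x i + x (i + 3) ≤ a i) ∧ ∑ i, a i ≤ ∑ i, x i + k

theorem HasC5Coloring.of_rotate {a : Fin 5 → ℕ} {k : ℕ} (r : Fin 5)
    (h : HasC5Coloring (fun i => a (r + i)) k) : HasC5Coloring a k := by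
  obtain ⟨x, hx, hsum⟩ := h
  refine ⟨fun i => x (i - r), fun i => ?_, ?_⟩
  · simpa [sub_add_eq_add_sub] using hx (i - r)
  · have hrot_a : ∑ i, a (r + i) = ∑ i, a i := Equiv.sum_comp (Equiv.addLeft r) a
    have hrot_x : ∑ i, x (i - r) = ∑ i, x i := Equiv.sum_comp (Equiv.subRight r) x
    simp only at hsum ⊢
    omega

theorem hasC5Coloring_of_two_mul_add_le_sum (a : Fin 5 → ℕ) {k : ℕ}
    (hadj : ∀ i, 2 * (a i + a (i + 1)) ≤ ∑ j, a j) (hsum : ∑ j, a j ≤ 2 * k) :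
    HasC5Coloring a k := by
  have := hadj 0; have := hadj 1; have := hadj 2; have := hadj 3; have := hadj 4
  simp only [Fin.sum_univ_five, Fin.isValue, Fin.reduceAdd] at *
  set n := a 0 + a 1 + a 2 + a 3 + a 4
  -- `n - 2 * (a (i + 3) + a (i + 4))` is twice the `x i` of the header. Rounding up `x 0` and
  -- `x 4`, which never meet in a constraint `x i + x (i + 3) ≤ a i`, gives `2 * ∑ x ≥ n - 1`.
  refine ⟨![(n - 2 * (a 3 + a 4) + 1) / 2, (n - 2 * (a 4 + a 0)) / 2,
    (n - 2 * (a 0 + a 1)) / 2, (n - 2 * (a 1 + a 2)) / 2, (n - 2 * (a 2 + a 3) + 1) / 2],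
    fun i => ?_, ?_⟩
  · fin_cases i <;>
      simp only [Fin.isValue, Fin.zero_eta, Fin.mk_one, Fin.reduceFinMk, Matrix.cons_val,
        Matrix.cons_val_zero, Matrix.cons_val_one, Fin.reduceAdd] <;>
      omega
  · simp only [Fin.sum_univ_five, Fin.isValue, Matrix.cons_val_zero, Matrix.cons_val_one,
      Matrix.cons_val]
    omega

theorem hasC5Coloring_of_sum_le_two_mul_max (a : Fin 5 → ℕ) {k : ℕ}
    (hmax : ∀ i, a i + a (i + 1) ≤ a 0 + a 1) (hk : a 0 + a 1 ≤ k)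
    (hn : ∑ j, a j ≤ 2 * (a 0 + a 1)) :
    HasC5Coloring a k := by
  have := hmax 1; have := hmax 2; have := hmax 3; have := hmax 4
  simp only [Fin.sum_univ_five, Fin.isValue, Fin.reduceAdd] at *
  -- Fibers 2 and 4 use only colors of fibers 0 and 1; fiber 3 shares what fits with 1, then 0.
  set x₁ := min (a 3) (a 1 - a 4)
  refine ⟨![a 2, x₁, 0, min (a 3 - x₁) (a 0 - a 2), a 4], fun i => ?_, ?_⟩
  · fin_cases i <;>
      simp only [Fin.isValue, Fin.zero_eta, Fin.mk_one, Fin.reduceFinMk, Matrix.cons_val,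
        Matrix.cons_val_zero, Matrix.cons_val_one, Fin.reduceAdd, zero_add, add_zero] <;>
      omega
  · simp only [Fin.sum_univ_five, Fin.isValue, Matrix.cons_val_zero, Matrix.cons_val_one,
      Matrix.cons_val, add_zero]
    omega

theorem hasC5Coloring_of_add_le_of_sum_le (a : Fin 5 → ℕ) {k : ℕ}
    (hadj : ∀ i, a i + a (i + 1) ≤ k) (hsum : ∑ i, a i ≤ 2 * k) : HasC5Coloring a k := by
  obtain ⟨r, -, hr⟩ := exists_max_image univ (fun i => a i + a (i + 1)) univ_nonempty
  by_cases hn : ∑ i, a i ≤ 2 * (a r + a (r + 1))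
  · refine .of_rotate r (hasC5Coloring_of_sum_le_two_mul_max _ (fun i => ?_) ?_ ?_)
    · simpa [add_assoc] using hr (r + i) (mem_univ _)
    · simpa using hadj r
    · have hrot : ∑ j, a (r + j) = ∑ j, a j := Equiv.sum_comp (Equiv.addLeft r) a
      rwa [hrot, add_zero]
  · exact hasC5Coloring_of_two_mul_add_le_sum a (fun i => by have := hr i (mem_univ _); omega) hsum

section Fibers

variable {V W α : Type*} [Fintype V] {G : SimpleGraph V} {H : SimpleGraph W} {f : V → W}

theorem SimpleGraph.colorable_of_card_fiber_le [DecidableEq W]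
    (hadj : ∀ u v, G.Adj u v → f u ≠ f v → H.Adj (f u) (f v))
    (C : W → Finset α) (U : Finset α) (hCU : ∀ w, C w ⊆ U)
    (hcard : ∀ w, #{v | f v = w} ≤ #(C w))
    (hdisj : ∀ w w', H.Adj w w' → Disjoint (C w) (C w')) :
    G.Colorable #U := by
  have emb (w : W) : Nonempty ({v // f v = w} ↪ C w) :=
    Function.Embedding.nonempty_of_card_le (by simpa [Fintype.card_subtype] using hcard w)
  let e (w : W) := (emb w).some
  let c (v : V) : α := e (f v) ⟨v, rfl⟩
  have hc (v : V) (w : W) (h : f v = w) : c v = e w ⟨v, h⟩ := by subst h; rfl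
  have hmem (v : V) : c v ∈ C (f v) := (e (f v) ⟨v, rfl⟩).2
  refine Fintype.card_coe U ▸ (Coloring.mk (fun v => (⟨c v, hCU _ (hmem v)⟩ : U)) ?_).colorable
  intro u v huv hcuv
  replace hcuv : c u = c v := congrArg Subtype.val hcuv
  by_cases hf : f u = f v
  · rw [hc u (f v) hf, hc v (f v) rfl] at hcuv
    exact G.ne_of_adj huv (congrArg Subtype.val ((e (f v)).injective (Subtype.ext hcuv)))
  · exact Finset.disjoint_left.1 (hdisj _ _ (hadj u v huv hf)) (hmem u) (by rw [hcuv]; exact hmem v)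

theorem IsCliqueExpansion.card_fiber_add_card_fiber_le_cliqueNum [DecidableEq W]
    (h : IsCliqueExpansion G H f) {i j : W} (hij : H.Adj i j) :
    #{v | f v = i} + #{v | f v = j} ≤ G.cliqueNum := by
  classical
  rw [← card_union_of_disjoint (disjoint_filter.2 fun v _ hi hj => hij.ne (hi.symm.trans hj))]
  refine IsClique.card_le_cliqueNum (tc := ?_)
  intro u hu v hv huv
  simp only [coe_union, coe_filter, mem_univ, true_and, Set.mem_union, Set.mem_ofPred_eq] at hu hv
  by_cases hf : f u = f v
  · exact h.2.1 (f v) hf rfl huv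
  · rw [h.2.2 u v hf]
    rcases hu with hu | hu <;> rcases hv with hv | hv
    · exact absurd (hu.trans hv.symm) hf
    · rwa [hu, hv]
    · rwa [hu, hv, H.adj_comm]
    · exact absurd (hu.trans hv.symm) hf

end Fibers

/-- Colors tagged `.inl i` are shared by the fibers `i` and `i + 2`, those tagged `.inr i` are
private to the fiber `i`. -/
def c5ColorTags (i : Fin 5) : Finset (Fin 5 ⊕ Fin 5) := {.inl i, .inl (i + 3), .inr i}

theorem disjoint_c5ColorTags : ∀ i j, (cycleGraph 5).Adj i j →
    Disjoint (c5ColorTags i) (c5ColorTags j) := by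
  decide

theorem IsCliqueExpansion.colorable_of_hasC5Coloring {V : Type*} [Fintype V] {G : SimpleGraph V}
    {f : V → Fin 5} (h : IsCliqueExpansion G (cycleGraph 5) f) {k : ℕ}
    (hk : HasC5Coloring (fun i => #{v | f v = i}) k) : G.Colorable k := by
  obtain ⟨x, hx, hsum⟩ := hk
  set a : Fin 5 → ℕ := fun i => #{v | f v = i}
  have h0 := hx 0; have h1 := hx 1; have h2 := hx 2; have h3 := hx 3; have h4 := hx 4
  simp only [Fin.sum_univ_five, Fin.isValue, Fin.reduceAdd] at h0 h1 h2 h3 h4 hsum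
  let len : Fin 5 ⊕ Fin 5 → ℕ := Sum.elim x fun i => a i - x i - x (i + 3)
  let C (i : Fin 5) := (c5ColorTags i).sigma fun t => range (len t)
  let U := univ.sigma fun t => range (len t)
  have hU : #U ≤ k := by
    simp only [U, len, card_sigma, card_range, Fintype.sum_sum_type, Sum.elim_inl, Sum.elim_inr,
      Fin.sum_univ_five, Fin.isValue, zero_add, Fin.reduceAdd]
    omega
  refine (colorable_of_card_fiber_le (fun u v huv hf => (h.2.2 u v hf).1 huv) C U
    (fun i => sigma_mono (subset_univ _) fun _ => subset_rfl) (fun i => ?_)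
    fun i j hij => ?_).mono hU
  · change a i ≤ _
    fin_cases i <;>
      simp only [C, len, c5ColorTags, Fin.isValue, Fin.zero_eta, Fin.mk_one, Fin.reduceFinMk,
        Fin.reduceAdd, zero_add, card_sigma, card_range, mem_insert, Sum.inl.injEq, Fin.reduceEq,
        mem_singleton, reduceCtorEq, or_self, not_false_eq_true, sum_insert, Sum.elim_inl,
        sum_singleton, Sum.elim_inr] <;>
      omega
  · exact Finset.disjoint_left.2 fun p hi hj =>
      Finset.disjoint_left.1 (disjoint_c5ColorTags i j hij) (mem_sigma.1 hi).1 (mem_sigma.1 hj).1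

theorem cliqueExpansion_C5_bound_general {V : Type*} [Fintype V] (G : SimpleGraph V)
    (f : V → Fin 5) (hexp : IsCliqueExpansion G (SimpleGraph.cycleGraph 5) f) :
    G.chromaticNumber ≤ ((5 * G.cliqueNum ⌈/⌉ 4 : ℕ) : ℕ∞) := by
  have hpair (i : Fin 5) : #{v | f v = i} + #{v | f v = i + 1} ≤ G.cliqueNum :=
    hexp.card_fiber_add_card_fiber_le_cliqueNum (cycleGraph_adj.2 (.inr (add_sub_cancel_left i 1)))
  have hceil : 5 * G.cliqueNum ≤ 4 * (5 * G.cliqueNum ⌈/⌉ 4) := by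
    rw [Nat.ceilDiv_eq_add_pred_div]; omega
  refine Colorable.chromaticNumber_le
    (hexp.colorable_of_hasC5Coloring (hasC5Coloring_of_add_le_of_sum_le _ (fun i => ?_) ?_))
  · have := hpair i; omega
  · have h0 := hpair 0; have h1 := hpair 1; have h2 := hpair 2; have h3 := hpair 3
    have h4 := hpair 4
    simp only [Fin.sum_univ_five, Fin.isValue, Fin.reduceAdd] at h0 h1 h2 h3 h4 ⊢
    omega

/-- If `G` is a clique expansion of the 5-cycle `C5` and every proper induced subgraph `G'` of
`G` satisfies `χ(G') ≤ ⌈5·ω(G')/4⌉`, then `χ(G) ≤ ⌈5·ω(G)/4⌉`. -/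
theorem cliqueExpansion_C5_bound {V : Type*} [Fintype V] (G : SimpleGraph V)
    (f : V → Fin 5) (hexp : IsCliqueExpansion G (SimpleGraph.cycleGraph 5) f)
    (hind : ∀ s : Set V, s ≠ Set.univ →
      (G.induce s).chromaticNumber ≤ ((5 * (G.induce s).cliqueNum ⌈/⌉ 4 : ℕ) : ℕ∞)) :
    G.chromaticNumber ≤ ((5 * G.cliqueNum ⌈/⌉ 4 : ℕ) : ℕ∞) :=
  cliqueExpansion_C5_bound_general G f hexp
end
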